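/- arXiv:2103.16416 — 11 statements merged into one kernel-verified Lean document; each statement's English description precedes it below -/
import Mathlib

section
/- Let G=(V,A) be a finite directed graph, v ∈ V a vertex, and suppose V is partitioned into k non-empty modules V = M_1 ⊎ M_2 ⊎ … ⊎ M_k. If v is a Slater winner of G, then there exists a winning ordering for v such that for all i ∈ {1,…,k}, the set M_i is contiguous. -/
/-- The feedback arc set implied by an ordering `r`: arcs of `A` whose endpoints
are reversed by `r`. -/
def fasSet {V : Type*} (A r : V → V → Prop) : Set (V × V) := {p | A p.1 p.2 ∧ r p.2 p.1}

/-- `r` is an optimal ordering for the digraph `(V, A)`: it is a strict linear order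
whose implied feedback arc set has minimum size. -/
def IsOptimalOrder {V : Type*} (A r : V → V → Prop) : Prop :=
  IsStrictTotalOrder V r ∧
    ∀ r' : V → V → Prop, IsStrictTotalOrder V r' → (fasSet A r).ncard ≤ (fasSet A r').ncard

/-- `r` places `v` last. -/
def PlacesLast {V : Type*} (r : V → V → Prop) (v : V) : Prop := ∀ u, u ≠ v → r u v

/-- `v` is a Slater winner: some optimal order places `v` last. -/
def SlaterWinner {V : Type*} (A : V → V → Prop) (v : V) : Prop :=
  ∃ r : V → V → Prop, IsOptimalOrder A r ∧ PlacesLast r v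

/-- `M` is a module of the digraph `(V, A)`. -/
def IsModule {V : Type*} (A : V → V → Prop) (M : Set V) : Prop :=
  ∀ x ∈ M, ∀ y ∈ M, ∀ z ∉ M, (A x z ↔ A y z) ∧ (A z x ↔ A z y)

/-- `S` is contiguous in the ordering `r`. -/
def Contig {V : Type*} (r : V → V → Prop) (S : Set V) : Prop :=
  ¬ ∃ x ∈ S, ∃ y ∈ S, ∃ z, z ∉ S ∧ r x z ∧ r z y

/-!
Fix an optimal order `r` placing `v` last and a module `M`. For `w ∈ M`, let `r_w` be the order
obtained from `r` by moving all of `M`, in its `r`-order, to the position of `w`. Arcs inside `M`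
or inside its complement keep their status, and since `M` is a module, every `x ∈ M` now
contributes to the feedback arc set exactly what `w` contributed in `r`. Hence
`|fas r_w| - |fas r| = |M| c(w) - ∑_{x ∈ M} c(x)`, where `c(x)` counts the reversed arcs between
`x` and the complement of `M`. Choosing `w` minimizing `c` keeps `r_w` optimal. If `v ∈ M` we must
take `w = v`: optimality of `r` makes every `c(x)` at least the mean, so all are equal to it.
Moving `M` keeps `v` last and keeps contiguous every set disjoint from `M`, so the modules of the
partition can be made contiguous one at a time.
-/

open Finset

instance Prod.Lex.isStrictTotalOrder {α β : Type*} (r : α → α → Prop) (s : β → β → Prop)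
    [IsStrictTotalOrder α r] [IsStrictTotalOrder β s] :
    IsStrictTotalOrder (α × β) (Prod.Lex r s) where

theorem Finset.card_nsmul_eq_sum_of_forall_sum_le {ι N : Type*} [AddCommMonoid N]
    [PartialOrder N] [IsOrderedCancelAddMonoid N] {s : Finset ι} {f : ι → N}
    (h : ∀ i ∈ s, ∑ j ∈ s, f j ≤ #s • f i) : ∀ i ∈ s, #s • f i = ∑ j ∈ s, f j := by
  have hsum : ∑ _i ∈ s, ∑ j ∈ s, f j = ∑ i ∈ s, #s • f i := by
    rw [sum_const, smul_sum]
  exact fun i hi => ((sum_eq_sum_iff_of_le h).1 hsum i hi).symm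

section MoveModule

open scoped Classical

variable {V : Type*} {r : V → V → Prop} {M S : Set V} {v w x y : V}

/-- `r` with `M` moved as a block, in its `r`-order, to the position of `w`. -/
noncomputable def moveModule (r : V → V → Prop) (M : Set V) (w : V) : V → V → Prop :=
  Function.onFun (Prod.Lex r r) fun x => (if x ∈ M then w else x, x)

theorem isStrictTotalOrder_moveModule [IsStrictTotalOrder V r] :
    IsStrictTotalOrder V (moveModule r M w) :=
  Function.Injective.isStrictTotalOrder_onFun (Prod.Lex r r)
    (f := fun x => (if x ∈ M then w else x, x)) fun _ _ h => congrArg Prod.snd h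

theorem moveModule_iff_of_mem_iff [Std.Irrefl r] (hxy : x ∈ M ↔ y ∈ M) :
    moveModule r M w x y ↔ r x y := by
  by_cases hx : x ∈ M
  · simp [moveModule, Function.onFun, Prod.lex_def, hx, hxy.1 hx, irrefl w]
  · simp [moveModule, Function.onFun, Prod.lex_def, hx, mt hxy.2 hx]

theorem moveModule_iff_of_mem_of_notMem (hw : w ∈ M) (hx : x ∈ M) (hy : y ∉ M) :
    moveModule r M w x y ↔ r w y := by
  have : w ≠ y := fun h => hy (h ▸ hw)
  simp [moveModule, Function.onFun, Prod.lex_def, hx, hy, this]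

theorem moveModule_iff_of_notMem_of_mem (hw : w ∈ M) (hx : x ∉ M) (hy : y ∈ M) :
    moveModule r M w x y ↔ r x w := by
  have : x ≠ w := fun h => hx (h ▸ hw)
  simp [moveModule, Function.onFun, Prod.lex_def, hx, hy, this]

theorem contig_moveModule [Std.Asymm r] (hw : w ∈ M) : Contig (moveModule r M w) M := by
  rintro ⟨x, hx, y, hy, z, hz, hxz, hzy⟩
  exact asymm ((moveModule_iff_of_mem_of_notMem hw hx hz).1 hxz)
    ((moveModule_iff_of_notMem_of_mem hw hz hy).1 hzy)

theorem Contig.moveModule [Std.Irrefl r] (hw : w ∈ M) (hSM : Disjoint S M) (hS : Contig r S) :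
    Contig (moveModule r M w) S := by
  rintro ⟨x, hx, y, hy, z, hz, hxz, hzy⟩
  have hxM : x ∉ M := hSM.notMem_of_mem_left hx
  have hyM : y ∉ M := hSM.notMem_of_mem_left hy
  by_cases hzM : z ∈ M
  · exact hS ⟨x, hx, y, hy, w, hSM.notMem_of_mem_right hw,
      (moveModule_iff_of_notMem_of_mem hw hxM hzM).1 hxz,
      (moveModule_iff_of_mem_of_notMem hw hzM hyM).1 hzy⟩
  · exact hS ⟨x, hx, y, hy, z, hz, (moveModule_iff_of_mem_iff (by tauto)).1 hxz,
      (moveModule_iff_of_mem_iff (by tauto)).1 hzy⟩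

theorem PlacesLast.moveModule [Std.Irrefl r] (hw : w ∈ M) (hwv : v ∈ M → w = v)
    (hv : PlacesLast r v) : PlacesLast (moveModule r M w) v := by
  intro u hu
  by_cases huv : u ∈ M ↔ v ∈ M
  · exact (moveModule_iff_of_mem_iff huv).2 (hv u hu)
  by_cases hvM : v ∈ M
  · have huM : u ∉ M := by tauto
    exact (moveModule_iff_of_notMem_of_mem hw huM hvM).2 (hwv hvM ▸ hv u hu)
  · have huM : u ∈ M := by tauto
    exact (moveModule_iff_of_mem_of_notMem hw huM hvM).2 (hv w fun h => hvM (h ▸ hw))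

end MoveModule

section Cost

open scoped Classical

variable {V : Type*} (A : V → V → Prop) {r : V → V → Prop} (M : Set V) {w : V}

noncomputable def backArc (r : V → V → Prop) (x y : V) : ℕ := if A x y ∧ r y x then 1 else 0

variable [Fintype V]

noncomputable def sameSideCost (r : V → V → Prop) : ℕ :=
  ∑ x with x ∈ M, ∑ y with y ∈ M, backArc A r x y +
    ∑ x with x ∉ M, ∑ y with y ∉ M, backArc A r x y

noncomputable def crossingCost (r : V → V → Prop) (x : V) : ℕ :=
  ∑ z with z ∉ M, (backArc A r x z + backArc A r z x)

theorem ncard_fasSet_eq_sum (r : V → V → Prop) :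
    (fasSet A r).ncard = ∑ x, ∑ y, backArc A r x y := by
  have : fasSet A r = ↑(univ.filter fun p : V × V => A p.1 p.2 ∧ r p.2 p.1) := by
    ext; simp [fasSet]
  rw [this, Set.ncard_coe_finset, card_filter, Fintype.sum_prod_type]
  rfl

theorem ncard_fasSet_eq_sameSideCost_add (r : V → V → Prop) :
    (fasSet A r).ncard = sameSideCost A M r + ∑ x with x ∈ M, crossingCost A M r x := by
  have split (F : V → ℕ) : ∑ x, F x = ∑ x with x ∈ M, F x + ∑ x with x ∉ M, F x :=
    (sum_filter_add_sum_filter_not _ _ _).symm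
  have hswap : ∑ x with x ∉ M, ∑ y with y ∈ M, backArc A r x y =
      ∑ x with x ∈ M, ∑ z with z ∉ M, backArc A r z x := sum_comm
  rw [ncard_fasSet_eq_sum, split, sum_congr rfl fun x _ => split _,
    sum_congr rfl fun x _ => split (backArc A r x), sum_add_distrib, sum_add_distrib, hswap,
    sameSideCost]
  simp only [crossingCost, sum_add_distrib]
  ring

variable {A M}

theorem sameSideCost_moveModule [Std.Irrefl r] :
    sameSideCost A M (moveModule r M w) = sameSideCost A M r := by
  have key : ∀ x y, (x ∈ M ↔ y ∈ M) → backArc A (moveModule r M w) x y = backArc A r x y :=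
    fun x y h => by simp only [backArc, moveModule_iff_of_mem_iff h.symm]
  unfold sameSideCost
  congr 1 <;> refine sum_congr rfl fun x hx => sum_congr rfl fun y hy => key x y ?_ <;>
    simp_all

theorem crossingCost_moveModule (hM : IsModule A M) (hw : w ∈ M) {x : V} (hx : x ∈ M) :
    crossingCost A M (moveModule r M w) x = crossingCost A M r w := by
  refine sum_congr rfl fun z hz => ?_
  simp only [mem_filter, mem_univ, true_and] at hz
  simp only [backArc, moveModule_iff_of_mem_of_notMem hw hx hz,
    moveModule_iff_of_notMem_of_mem hw hz hx, (hM x hx w hw z hz).1, (hM x hx w hw z hz).2]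

theorem ncard_fasSet_moveModule [Std.Irrefl r] (hM : IsModule A M) (hw : w ∈ M) :
    (fasSet A (moveModule r M w)).ncard =
      sameSideCost A M r + #{x | x ∈ M} • crossingCost A M r w := by
  rw [ncard_fasSet_eq_sameSideCost_add A M, sameSideCost_moveModule,
    sum_congr rfl fun x hx => crossingCost_moveModule hM hw (by simpa using hx), sum_const]

end Cost

section Winner

open Function

variable {V : Type*} [Fintype V] {A r : V → V → Prop} {M : Set V} {v : V}

theorem IsOptimalOrder.exists_moveModule (hopt : IsOptimalOrder A r) (hM : IsModule A M)
    (hne : M.Nonempty) (v : V) :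
    ∃ w ∈ M, (v ∈ M → w = v) ∧ IsOptimalOrder A (moveModule r M w) := by
  have := hopt.1
  classical
  set s : Finset V := {x | x ∈ M}
  have hs {x : V} : x ∈ s ↔ x ∈ M := by simp [s]
  set c := crossingCost A M r
  have hcost {w : V} (hw : w ∈ M) :
      (fasSet A (moveModule r M w)).ncard ≤ (fasSet A r).ncard ↔ #s • c w ≤ ∑ x ∈ s, c x := by
    rw [ncard_fasSet_moveModule hM hw, ncard_fasSet_eq_sameSideCost_add A M r]
    exact Nat.add_le_add_iff_left
  suffices ∃ w ∈ M, (v ∈ M → w = v) ∧ #s • c w ≤ ∑ x ∈ s, c x by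
    obtain ⟨w, hw, hwv, hle⟩ := this
    exact ⟨w, hw, hwv, isStrictTotalOrder_moveModule,
      fun r' hr' => ((hcost hw).2 hle).trans (hopt.2 r' hr')⟩
  by_cases hv : v ∈ M
  · have hmean : ∀ x ∈ s, ∑ y ∈ s, c y ≤ #s • c x := fun x hx => by
      have := hopt.2 _ (isStrictTotalOrder_moveModule (r := r) (M := M) (w := x))
      rw [ncard_fasSet_moveModule hM (hs.1 hx), ncard_fasSet_eq_sameSideCost_add A M r] at this
      exact Nat.add_le_add_iff_left.1 this
    exact ⟨v, hv, fun _ => rfl, (card_nsmul_eq_sum_of_forall_sum_le hmean v (hs.2 hv)).le⟩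
  · obtain ⟨w, hw, hmin⟩ := s.exists_min_image c (hne.elim fun x hx => ⟨x, hs.2 hx⟩)
    exact ⟨w, hs.1 hw, fun h => absurd h hv, card_nsmul_le_sum s c _ hmin⟩

theorem IsOptimalOrder.exists_contig_of_isModule (hopt : IsOptimalOrder A r)
    (hlast : PlacesLast r v) (hM : IsModule A M) :
    ∃ r', IsOptimalOrder A r' ∧ PlacesLast r' v ∧ Contig r' M ∧
      ∀ S, Disjoint S M → Contig r S → Contig r' S := by
  rcases M.eq_empty_or_nonempty with rfl | hne
  · exact ⟨r, hopt, hlast, fun ⟨_, h, _⟩ => h, fun _ _ h => h⟩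
  have := hopt.1
  obtain ⟨w, hw, hwv, hopt'⟩ := hopt.exists_moveModule hM hne v
  exact ⟨_, hopt', hlast.moveModule hw hwv, contig_moveModule hw,
    fun _ hS h => h.moveModule hw hS⟩

theorem SlaterWinner.exists_forall_contig {ι : Type*} {M : ι → Set V} (hwin : SlaterWinner A v)
    (hmod : ∀ i, IsModule A (M i)) (hdisj : Pairwise (Disjoint on M)) (s : Finset ι) :
    ∃ r, IsOptimalOrder A r ∧ PlacesLast r v ∧ ∀ i ∈ s, Contig r (M i) := by
  classical
  induction s using Finset.induction_on with
  | empty =>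
    obtain ⟨r, hopt, hlast⟩ := hwin
    exact ⟨r, hopt, hlast, by simp⟩
  | insert i s hi ih =>
    obtain ⟨r, hopt, hlast, hs⟩ := ih
    obtain ⟨r', hopt', hlast', hMi, hpres⟩ := hopt.exists_contig_of_isModule hlast (hmod i)
    refine ⟨r', hopt', hlast', fun j hj => ?_⟩
    rcases mem_insert.1 hj with rfl | hj
    · exact hMi
    · exact hpres _ (hdisj (ne_of_mem_of_not_mem hj hi)) (hs j hj)

end Winner

theorem stmt0_general {V : Type*} [Fintype V] (A : V → V → Prop)
    (v : V) (k : ℕ) (M : Fin k → Set V)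
    (hdisj : ∀ i j, i ≠ j → Disjoint (M i) (M j))
    (hmod : ∀ i, IsModule A (M i))
    (hwin : SlaterWinner A v) :
    ∃ r : V → V → Prop, IsOptimalOrder A r ∧ PlacesLast r v ∧ ∀ i, Contig r (M i) := by
  obtain ⟨r, hopt, hlast, hcontig⟩ := hwin.exists_forall_contig hmod hdisj univ
  exact ⟨r, hopt, hlast, fun i => hcontig i (mem_univ i)⟩

theorem stmt0 {V : Type*} [Fintype V] (A : V → V → Prop) (hA : Irreflexive A)
    (v : V) (k : ℕ) (M : Fin k → Set V)
    (hne : ∀ i, (M i).Nonempty)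
    (hdisj : ∀ i j, i ≠ j → Disjoint (M i) (M j))
    (hcover : (⋃ i, M i) = Set.univ)
    (hmod : ∀ i, IsModule A (M i))
    (hwin : SlaterWinner A v) :
    ∃ r : V → V → Prop, IsOptimalOrder A r ∧ PlacesLast r v ∧ ∀ i, Contig r (M i) :=
  stmt0_general A v k M hdisj hmod hwin
end

section
/- Let G=(V,A) be a finite directed graph and ≺ a linear order on V. Let x ∈ V and let Z ⊆ V be a nonempty set forming an interval of ≺ located immediately after x (i.e., Z = {u ∈ V : x ≺ u and u ⪯ z₀} for some z₀ ∈ Z). Let ≺' be the linear order obtained from ≺ by moving x to the position immediately after z₀, leaving the relative order of all other vertices unchanged. Then |fas(≺')| = |fas(≺)| + |{z ∈ Z : (x,z) ∈ A}| − |{z ∈ Z : (z,x) ∈ A}|. -/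
open Set

theorem Set.ncard_sdiff_union_add_ncard {α : Type*} {s t u : Set α} (hs : s.Finite)
    (hu : u.Finite) (hts : t ⊆ s) (hus : Disjoint u s) :
    (s \ t ∪ u).ncard + t.ncard = s.ncard + u.ncard := by
  rw [ncard_union_eq (hus.mono_right sdiff_subset).symm hs.sdiff hu, add_right_comm,
    ncard_sdiff_add_ncard_of_subset hts hs]

section MoveVertex

variable {V : Type*} {A r r' : V → V → Prop} {x : V} {Z : Set V}

theorem fasSet_eq_of_move (hAx : ¬ A x x)
    (hfix : ∀ u v, u ≠ x → v ≠ x → (r' u v ↔ r u v))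
    (hto : ∀ u, u ≠ x → (r' u x ↔ r u x ∨ u ∈ Z))
    (hfrom : ∀ v, v ≠ x → (r' x v ↔ r x v ∧ v ∉ Z)) :
    fasSet A r' = fasSet A r \ (·, x) '' {z ∈ Z | A z x} ∪ (x, ·) '' {z ∈ Z | A x z} := by
  ext ⟨u, v⟩
  simp only [fasSet, mem_union, mem_sdiff, mem_image, mem_ofPred_eq, Prod.mk.injEq]
  by_cases hu : u = x <;> by_cases hv : v = x <;> grind

theorem ncard_fasSet_of_move [Finite V] [Std.Asymm r] (hAx : ¬ A x x) (hZ : ∀ z ∈ Z, r x z)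
    (hfix : ∀ u v, u ≠ x → v ≠ x → (r' u v ↔ r u v))
    (hto : ∀ u, u ≠ x → (r' u x ↔ r u x ∨ u ∈ Z))
    (hfrom : ∀ v, v ≠ x → (r' x v ↔ r x v ∧ v ∉ Z)) :
    (fasSet A r').ncard + {z ∈ Z | A z x}.ncard
      = (fasSet A r).ncard + {z ∈ Z | A x z}.ncard := by
  have hout : (·, x) '' {z ∈ Z | A z x} ⊆ fasSet A r := by
    rintro _ ⟨z, ⟨hz, hzx⟩, rfl⟩
    exact ⟨hzx, hZ z hz⟩
  have hin : Disjoint ((x, ·) '' {z ∈ Z | A x z}) (fasSet A r) := by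
    rw [disjoint_left]
    rintro _ ⟨z, ⟨hz, -⟩, rfl⟩ ⟨-, hzx⟩
    exact asymm (hZ z hz) hzx
  rw [fasSet_eq_of_move hAx hfix hto hfrom,
    ← ncard_image_of_injective {z ∈ Z | A z x} (Prod.mk_left_injective x),
    ← ncard_image_of_injective {z ∈ Z | A x z} (Prod.mk_right_injective x)]
  exact ncard_sdiff_union_add_ncard (toFinite _) (toFinite _) hout hin

end MoveVertex

section Interval

variable {V : Type*} {r : V → V → Prop} [IsStrictTotalOrder V r] {x z₀ : V}

theorem rel_end_iff_of_rel (hxz₀ : r x z₀) (v : V) :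
    r z₀ v ↔ r x v ∧ v ∉ {u | r x u ∧ (u = z₀ ∨ r u z₀)} := by
  refine ⟨fun h => ⟨_root_.trans hxz₀ h, ?_⟩, fun ⟨hxv, hv⟩ => ?_⟩
  · rintro ⟨-, rfl | hvz₀⟩
    exacts [irrefl _ h, asymm h hvz₀]
  · rcases trichotomous_of r z₀ v with h | rfl | h
    exacts [h, absurd ⟨hxv, .inl rfl⟩ hv, absurd ⟨hxv, .inr h⟩ hv]

theorem eq_or_rel_end_iff_of_rel (hxz₀ : r x z₀) {u : V} (hu : u ≠ x) :
    (u = z₀ ∨ r u z₀) ↔ r u x ∨ u ∈ {u | r x u ∧ (u = z₀ ∨ r u z₀)} := by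
  refine ⟨fun h => ?_, ?_⟩
  · rcases trichotomous_of r u x with hux | rfl | hxu
    exacts [.inl hux, absurd rfl hu, .inr ⟨hxu, h⟩]
  · rintro (hux | ⟨-, h⟩)
    exacts [.inr (_root_.trans hux hxz₀), h]

end Interval

theorem stmt1_general {V : Type*} [Fintype V] (A : V → V → Prop) (hA : Irreflexive A)
    (r : V → V → Prop) (hr : IsStrictTotalOrder V r)
    (x z₀ : V) (Z : Set V)
    (hZdef : Z = {u | r x u ∧ (u = z₀ ∨ r u z₀)})
    (hz₀ : z₀ ∈ Z)
    (r' : V → V → Prop)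
    (hfix : ∀ u v, u ≠ x → v ≠ x → (r' u v ↔ r u v))
    (hto : ∀ u, u ≠ x → (r' u x ↔ (u = z₀ ∨ r u z₀)))
    (hfrom : ∀ v, v ≠ x → (r' x v ↔ r z₀ v)) :
    (fasSet A r').ncard + {z ∈ Z | A z x}.ncard
      = (fasSet A r).ncard + {z ∈ Z | A x z}.ncard := by
  subst hZdef
  have hxz₀ : r x z₀ := hz₀.1
  refine ncard_fasSet_of_move (hA x) (fun z hz => hz.1) hfix (fun u hu => ?_) (fun v hv => ?_)
  · rw [hto u hu, eq_or_rel_end_iff_of_rel hxz₀ hu]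
  · rw [hfrom v hv, rel_end_iff_of_rel hxz₀]

/-- Moving `x` to the position immediately after the interval
`Z = {u | x ≺ u and u ⪯ z₀}` changes the size of the implied feedback arc set by
`|{z ∈ Z : (x,z) ∈ A}| − |{z ∈ Z : (z,x) ∈ A}|` (stated additively to avoid
truncated subtraction). -/
theorem stmt1 {V : Type*} [Fintype V] (A : V → V → Prop) (hA : Irreflexive A)
    (r : V → V → Prop) (hr : IsStrictTotalOrder V r)
    (x z₀ : V) (Z : Set V)
    (hZdef : Z = {u | r x u ∧ (u = z₀ ∨ r u z₀)})
    (hz₀ : z₀ ∈ Z)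
    (r' : V → V → Prop) (hr' : IsStrictTotalOrder V r')
    (hfix : ∀ u v, u ≠ x → v ≠ x → (r' u v ↔ r u v))
    (hto : ∀ u, u ≠ x → (r' u x ↔ (u = z₀ ∨ r u z₀)))
    (hfrom : ∀ v, v ≠ x → (r' x v ↔ r z₀ v)) :
    (fasSet A r').ncard + {z ∈ Z | A z x}.ncard
      = (fasSet A r).ncard + {z ∈ Z | A x z}.ncard :=
  stmt1_general A hA r hr x z₀ Z hZdef hz₀ r' hfix hto hfrom
end

section
/- Let G=(V,A) be a finite directed graph and ≺ a linear order on V. Let X, Z ⊆ V be disjoint nonempty sets such that X is an interval of ≺ and Z is the interval of ≺ immediately following X. Suppose that for every x ∈ X, |{z ∈ Z : (z,x) ∈ A}| = |{z ∈ Z : (x,z) ∈ A}|. Then the linear order ≺' obtained from ≺ by swapping the intervals X and Z (moving all of X immediately after the last element of Z, preserving the internal order of X, the internal order of Z, and the positions of all other vertices) satisfies |fas(≺')| = |fas(≺)|. -/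
lemma Set.ncard_eq_sum_ncard_fiber {α β : Type*} [Fintype α] [Fintype β] (s : Set (α × β)) :
    s.ncard = ∑ x, {y | (x, y) ∈ s}.ncard := by
  classical
  simp only [Set.ncard_eq_toFinset_card', Finset.card_eq_sum_ones, Set.toFinset_ofPred,
    Finset.sum_filter]
  rw [← Fintype.sum_prod_type', ← Finset.sum_filter, Set.filter_mem_univ_eq_toFinset]

lemma Set.ncard_sdiff_union_eq {α : Type*} {s b c : Set α} (hs : s.Finite) (hc : c.Finite)
    (hb : b ⊆ s) (hcs : Disjoint c s) (hbc : b.ncard = c.ncard) :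
    (s \ b ∪ c).ncard = s.ncard := by
  rw [Set.ncard_union_eq (hcs.mono_right Set.sdiff_subset).symm hs.sdiff hc,
    Set.ncard_sdiff hb (hs.subset hb), hbc]
  have := Set.ncard_le_ncard hb hs
  omega

section

variable {V : Type*} (A : V → V → Prop)

def arcsFromTo (S T : Set V) : Set (V × V) := S ×ˢ T ∩ {p | A p.1 p.2}

lemma ncard_arcsFromTo_comm [Fintype V] {X Z : Set V}
    (hbal : ∀ x ∈ X, {z ∈ Z | A z x}.ncard = {z ∈ Z | A x z}.ncard) :
    (arcsFromTo A Z X).ncard = (arcsFromTo A X Z).ncard := by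
  rw [← Set.ncard_preimage_of_injective_subset_range Prod.swap_injective
    (by simp [Prod.swap_surjective.range_eq]), Set.ncard_eq_sum_ncard_fiber,
    Set.ncard_eq_sum_ncard_fiber]
  refine Finset.sum_congr rfl fun x _ => ?_
  by_cases hx : x ∈ X
  · simpa [arcsFromTo, hx, and_comm] using hbal x hx
  · simp [arcsFromTo, hx]

variable {A} {r r' : V → V → Prop} {X Z : Set V}

lemma fasSet_eq_of_swap (hr' : ∀ u v, r' u v ↔ ((u ∈ Z ∧ v ∈ X) ∨ (r u v ∧ ¬(u ∈ X ∧ v ∈ Z)))) :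
    fasSet A r' = fasSet A r \ arcsFromTo A Z X ∪ arcsFromTo A X Z := by
  ext ⟨u, v⟩
  simp only [fasSet, arcsFromTo, hr', Set.mem_union, Set.mem_sdiff, Set.mem_inter_iff,
    Set.mem_prod, Set.mem_ofPred_eq]
  tauto

lemma arcsFromTo_subset_fasSet (hXZ : ∀ a ∈ X, ∀ z ∈ Z, r a z) :
    arcsFromTo A Z X ⊆ fasSet A r :=
  fun _ ⟨⟨hz, hx⟩, ha⟩ => ⟨ha, hXZ _ hx _ hz⟩

lemma disjoint_arcsFromTo_fasSet [Std.Asymm r] (hXZ : ∀ a ∈ X, ∀ z ∈ Z, r a z) :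
    Disjoint (arcsFromTo A X Z) (fasSet A r) :=
  Set.disjoint_left.2 fun _ ⟨⟨hx, hz⟩, _⟩ ⟨_, hzx⟩ => Std.Asymm.asymm _ _ (hXZ _ hx _ hz) hzx

end

theorem stmt2_general {V : Type*} [Fintype V] (A : V → V → Prop)
    (r : V → V → Prop) (hr : IsStrictTotalOrder V r)
    (X Z : Set V)
    (hXZ : ∀ a ∈ X, ∀ z ∈ Z, r a z)
    (hbal : ∀ x ∈ X, {z ∈ Z | A z x}.ncard = {z ∈ Z | A x z}.ncard)
    (r' : V → V → Prop)
    (hr'def : ∀ u v, r' u v ↔ ((u ∈ Z ∧ v ∈ X) ∨ (r u v ∧ ¬(u ∈ X ∧ v ∈ Z)))) :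
    (fasSet A r').ncard = (fasSet A r).ncard := by
  rw [fasSet_eq_of_swap hr'def]
  exact Set.ncard_sdiff_union_eq (Set.toFinite _) (Set.toFinite _)
    (arcsFromTo_subset_fasSet hXZ) (disjoint_arcsFromTo_fasSet hXZ) (ncard_arcsFromTo_comm A hbal)

/-- Swapping two adjacent intervals `X` and `Z`, where every `x ∈ X` has equally many
in- and out-arcs towards `Z`, preserves the size of the implied feedback arc set. -/
theorem stmt2 {V : Type*} [Fintype V] (A : V → V → Prop) (hA : Irreflexive A)
    (r : V → V → Prop) (hr : IsStrictTotalOrder V r)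
    (X Z : Set V) (hXne : X.Nonempty) (hZne : Z.Nonempty) (hdisj : Disjoint X Z)
    (hContigX : Contig r X) (hContigZ : Contig r Z)
    (hXZ : ∀ a ∈ X, ∀ z ∈ Z, r a z)
    (hadj : ∀ u, u ∉ X → u ∉ Z → (∀ a ∈ X, r u a) ∨ (∀ z ∈ Z, r z u))
    (hbal : ∀ x ∈ X, {z ∈ Z | A z x}.ncard = {z ∈ Z | A x z}.ncard)
    (r' : V → V → Prop)
    (hr'def : ∀ u v, r' u v ↔ ((u ∈ Z ∧ v ∈ X) ∨ (r u v ∧ ¬(u ∈ X ∧ v ∈ Z)))) :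
    (fasSet A r').ncard = (fasSet A r).ncard :=
  stmt2_general A r hr X Z hXZ hbal r' hr'def
end

section
/- Let S ⊆ {v_1,…,v_n} be an independent set of G with |S| = k. Define the assignment σ_S by σ_S(x_i^j) = True iff v_i ∈ S (for all i ∈ {1,…,n} and j ∈ {1,…,n+1}), and σ_S(y_i) = True iff |S ∩ {v_1,…,v_i}| is odd. Then σ_S is admissible, its weight equals k(n+1) + |{i ∈ {1,…,n} : |S ∩ {v_1,…,v_i}| is odd}| (in particular the weight is at least k(n+1) and at most k(n+1)+n), and σ_S(y_n) = True if and only if k is odd. -/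
/-!
Everything reduces to prefix counts `|S ∩ {v_1, …, v_i}|`: passing from the prefix ending at
`v_{i-1}` to the one ending at `v_i` adds `v_i` exactly when `v_i ∈ S`, which is the XOR recursion
(c); condition (b) is the independence of `S`. The `x`-variables contribute `k (n + 1)` to the
weight, and the last prefix is all of `S`, so `y_n` records the parity of `k`.
-/

/-- A truth assignment to the variables `x_i^j` (`i ∈ Fin n`, `j ∈ Fin (n+1)`) and
`y_i` (`i ∈ Fin n`) is admissible if: (a) all copies `x_i^j` of a variable agree;
(b) for every edge of `G` not both endpoints have a true copy; (c) `y_0 = x_0^0`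
and `y_i = y_{i-1} XOR x_i^0` for `i ≥ 1`. -/
def Admissible {n : ℕ} (G : SimpleGraph (Fin n)) (σx : Fin n → Fin (n+1) → Bool)
    (σy : Fin n → Bool) : Prop :=
  (∀ i : Fin n, ∀ j k : Fin (n+1), σx i j = true → σx i k = true) ∧
  (∀ i₁ i₂ : Fin n, G.Adj i₁ i₂ → ∀ j k : Fin (n+1), ¬(σx i₁ j = true ∧ σx i₂ k = true)) ∧
  (∀ i : Fin n, σy i =
    if (i : ℕ) = 0 then σx i 0
    else xor (σy ⟨(i : ℕ) - 1, lt_of_le_of_lt (Nat.sub_le _ _) i.isLt⟩) (σx i 0))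

/-- The weight of an assignment: the number of variables set to `true`. -/
def aWeight {n : ℕ} (σx : Fin n → Fin (n+1) → Bool) (σy : Fin n → Bool) : ℕ :=
  (Finset.univ.filter (fun p : Fin n × Fin (n+1) => σx p.1 p.2 = true)).card +
    (Finset.univ.filter (fun i : Fin n => σy i = true)).card

open Finset

section PrefixCount

variable {α : Type*} [LinearOrder α] (S : Finset α)

theorem odd_card_filter_le_of_isMin {i : α} (hi : IsMin i) :
    Odd #(S.filter (· ≤ i)) ↔ i ∈ S := by
  have : S.filter (· ≤ i) = S.filter (· = i) := filter_congr fun t _ => ⟨hi.eq_of_le, le_of_eq⟩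
  by_cases hiS : i ∈ S <;> simp [this, filter_eq', hiS]

theorem card_filter_le_of_covBy {i j : α} (h : j ⋖ i) :
    #(S.filter (· ≤ i)) = #(S.filter (· ≤ j)) + if i ∈ S then 1 else 0 := by
  have hsplit : S.filter (· ≤ i) = S.filter (· ≤ j) ∪ S.filter (· = i) := by
    rw [← filter_or]
    exact filter_congr fun t _ => by rw [le_iff_lt_or_eq, h.le_iff_lt_left]
  have hdisj : Disjoint (S.filter (· ≤ j)) (S.filter (· = i)) :=
    disjoint_filter.2 fun t _ htj hti => (hti ▸ h.lt).not_ge htj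
  rw [hsplit, card_union_of_disjoint hdisj, filter_eq']
  split_ifs <;> simp

theorem decide_odd_card_filter_le_of_covBy {i j : α} (h : j ⋖ i) :
    decide (Odd #(S.filter (· ≤ i))) = xor (decide (Odd #(S.filter (· ≤ j)))) (decide (i ∈ S)) := by
  rw [card_filter_le_of_covBy S h]
  by_cases hiS : i ∈ S <;> simp [hiS, Nat.odd_add_one, -Nat.not_odd_iff_even]

end PrefixCount

theorem Fin.isMin_of_val_eq_zero {n : ℕ} {i : Fin n} (hi : (i : ℕ) = 0) : IsMin i :=
  fun t _ => by simp [Fin.le_def, hi]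

theorem Fin.pred_val_covBy {n : ℕ} (i : Fin n) (hi : (i : ℕ) ≠ 0) :
    (⟨(i : ℕ) - 1, lt_of_le_of_lt (Nat.sub_le _ _) i.isLt⟩ : Fin n) ⋖ i :=
  covBy_iff_lt_iff_le_left.2 fun {z} => by
    simp only [Fin.lt_def, Fin.le_def]
    omega

section Assignment

variable {n : ℕ} (S : Finset (Fin n))

def sigmaX : Fin n → Fin (n + 1) → Bool := fun i _ => decide (i ∈ S)

def sigmaY : Fin n → Bool := fun i => decide (Odd #(S.filter (· ≤ i)))

theorem admissible_sigma (G : SimpleGraph (Fin n)) (hInd : ∀ a ∈ S, ∀ b ∈ S, ¬ G.Adj a b) :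
    Admissible G (sigmaX S) (sigmaY S) := by
  refine ⟨fun i j k h => h, fun i₁ i₂ hadj j k ⟨h₁, h₂⟩ => ?_, fun i => ?_⟩
  · simp only [sigmaX, decide_eq_true_eq] at h₁ h₂
    exact hInd _ h₁ _ h₂ hadj
  · split_ifs with hi
    · simpa [sigmaX, sigmaY] using odd_card_filter_le_of_isMin S (Fin.isMin_of_val_eq_zero hi)
    · exact decide_odd_card_filter_le_of_covBy S (Fin.pred_val_covBy i hi)

theorem aWeight_sigma :
    aWeight (sigmaX S) (sigmaY S) =
      #S * (n + 1) + #(univ.filter fun i : Fin n => Odd #(S.filter (· ≤ i))) := by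
  have hx : univ.filter (fun p : Fin n × Fin (n + 1) => sigmaX S p.1 p.2 = true) = S ×ˢ univ := by
    ext ⟨i, j⟩
    simp [sigmaX]
  simp [aWeight, hx, sigmaY]

theorem filter_le_last_eq_self (hn : 0 < n) : S.filter (· ≤ (⟨n - 1, Nat.sub_lt hn one_pos⟩ : Fin n)) = S :=
  filter_true_of_mem fun t _ => by
    simp only [Fin.le_def]
    omega

end Assignment

theorem stmt3 {n : ℕ} (hn : 0 < n) (G : SimpleGraph (Fin n)) (S : Finset (Fin n))
    (hInd : ∀ a ∈ S, ∀ b ∈ S, ¬ G.Adj a b) (k : ℕ) (hk : S.card = k)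
    (σx : Fin n → Fin (n+1) → Bool) (σy : Fin n → Bool)
    (hσx : ∀ i j, σx i j = decide (i ∈ S))
    (hσy : ∀ i : Fin n, σy i = decide (Odd (S.filter (fun t => t ≤ i)).card)) :
    Admissible G σx σy ∧
    aWeight σx σy = k * (n + 1) +
      (Finset.univ.filter (fun i : Fin n => Odd (S.filter (fun t => t ≤ i)).card)).card ∧
    k * (n + 1) ≤ aWeight σx σy ∧ aWeight σx σy ≤ k * (n + 1) + n ∧
    (σy ⟨n - 1, Nat.sub_lt hn one_pos⟩ = true ↔ Odd k) := by
  obtain rfl : σx = sigmaX S := funext₂ hσx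
  obtain rfl : σy = sigmaY S := funext hσy
  subst hk
  have hodd_le : #(univ.filter fun i : Fin n => Odd #(S.filter (· ≤ i))) ≤ n :=
    (card_filter_le _ _).trans_eq (card_fin n)
  rw [aWeight_sigma]
  refine ⟨admissible_sigma S G hInd, rfl, by omega, by omega, ?_⟩
  simp [sigmaY, filter_le_last_eq_self S hn]
end

section
/- Let σ be an admissible assignment and let S = {v_i : σ(x_i^1) = True}. Then S is an independent set of G, the weight of σ satisfies |S|(n+1) ≤ weight(σ) ≤ |S|(n+1) + n, and σ(y_n) = True if and only if |S| is odd. -/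
open Finset

lemma card_filter_le_eq_card_filter_lt_add {n : ℕ} (p : Fin n → Prop) [DecidablePred p] {m : ℕ}
    (h : m < n) :
    #{i : Fin n | (i : ℕ) ≤ m ∧ p i} =
      #{i : Fin n | (i : ℕ) < m ∧ p i} + if p ⟨m, h⟩ then 1 else 0 := by
  by_cases hp : p ⟨m, h⟩
  · rw [if_pos hp, ← card_insert_of_notMem (a := ⟨m, h⟩) (by simp)]
    congr 1
    ext i
    simp only [mem_filter, mem_univ, true_and, mem_insert, Fin.ext_iff]
    constructor
    · rintro ⟨hi, hpi⟩
      rcases Nat.lt_or_eq_of_le hi with hi | hi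
      · exact Or.inr ⟨hi, hpi⟩
      · exact Or.inl hi
    · rintro (hi | ⟨hi, hpi⟩)
      · exact ⟨hi.le, (Fin.ext hi : i = ⟨m, h⟩) ▸ hp⟩
      · exact ⟨hi.le, hpi⟩
  · rw [if_neg hp, add_zero]
    congr 1
    ext i
    simp only [mem_filter, mem_univ, true_and]
    refine ⟨fun ⟨hi, hpi⟩ => ⟨?_, hpi⟩, fun ⟨hi, hpi⟩ => ⟨hi.le, hpi⟩⟩
    rcases Nat.lt_or_eq_of_le hi with hi | hi
    · exact hi
    · exact absurd ((Fin.ext hi : i = ⟨m, h⟩) ▸ hpi) hp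

lemma eq_decide_odd_card_of_xor_recurrence {n : ℕ} (x y : Fin n → Bool)
    (hy : ∀ i : Fin n, y i =
      if (i : ℕ) = 0 then x i
      else xor (y ⟨(i : ℕ) - 1, lt_of_le_of_lt (Nat.sub_le _ _) i.isLt⟩) (x i))
    (m : ℕ) (hm : m < n) :
    y ⟨m, hm⟩ = decide (Odd #{i : Fin n | (i : ℕ) ≤ m ∧ x i = true}) := by
  induction m with
  | zero =>
    rw [hy, card_filter_le_eq_card_filter_lt_add _ hm]
    cases x ⟨0, hm⟩ <;> simp
  | succ m ih =>
    rw [hy, if_neg m.succ_ne_zero, card_filter_le_eq_card_filter_lt_add _ hm]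
    show xor (y ⟨m, by omega⟩) _ = _
    simp only [Nat.lt_succ_iff, ih]
    cases x ⟨m + 1, hm⟩ <;> simp [Nat.odd_add_one, ← Nat.not_even_iff_odd]

lemma filter_eq_filter_product_univ {α β : Type*} [Fintype α] [Fintype β] (f : α → β → Bool)
    (b : β) (hf : ∀ a j k, f a j = true → f a k = true) :
    ({p : α × β | f p.1 p.2 = true} : Finset _) = ({a | f a b = true} : Finset α) ×ˢ univ := by
  ext ⟨a, j⟩
  simp only [mem_filter, mem_univ, true_and, mem_product, and_true]
  exact ⟨hf a j b, hf a b j⟩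

theorem stmt4 {n : ℕ} (hn : 0 < n) (G : SimpleGraph (Fin n))
    (σx : Fin n → Fin (n+1) → Bool) (σy : Fin n → Bool)
    (hadm : Admissible G σx σy)
    (S : Finset (Fin n)) (hS : S = Finset.univ.filter (fun i => σx i 0 = true)) :
    (∀ a ∈ S, ∀ b ∈ S, ¬ G.Adj a b) ∧
    S.card * (n + 1) ≤ aWeight σx σy ∧ aWeight σx σy ≤ S.card * (n + 1) + n ∧
    (σy ⟨n - 1, Nat.sub_lt hn one_pos⟩ = true ↔ Odd S.card) := by
  obtain ⟨hcopies, hedges, hparity⟩ := hadm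
  have hx : #{p : Fin n × Fin (n + 1) | σx p.1 p.2 = true} = #S * (n + 1) := by
    rw [filter_eq_filter_product_univ σx 0 hcopies, card_product, card_univ, Fintype.card_fin, hS]
  have hy : #{i | σy i = true} ≤ n := (card_filter_le _ _).trans_eq (card_fin n)
  have hSlast : ({i : Fin n | (i : ℕ) ≤ n - 1 ∧ σx i 0 = true} : Finset _) = S := by
    rw [hS]
    exact filter_congr fun i _ => and_iff_right (Nat.le_sub_one_of_lt i.isLt)
  refine ⟨fun a ha b hb hab => ?_, ?_, ?_, ?_⟩
  · rw [hS, mem_filter] at ha hb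
    exact hedges a b hab 0 0 ⟨ha.2, hb.2⟩
  · unfold aWeight; omega
  · unfold aWeight; omega
  · rw [eq_decide_odd_card_of_xor_recurrence _ _ hparity, hSlast, decide_eq_true_iff]
end

section
/- The maximum size of an independent set of G is odd if and only if there exists an admissible assignment σ with σ(y_n) = True whose weight is maximum among all admissible assignments. -/
/-! An admissible assignment is determined by the independent set `S = {i | x_i^0}`: every copy
`x_i^j` equals `[i ∈ S]`, and `y_i` is the parity of `#(S ∩ [0, i])`, so the last `y` records the
parity of `#S`. The weight is `(n + 1) * #S` plus the number of true `y`'s, which is at most `n`;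
hence an assignment of maximum weight has a maximum independent set as its support. -/

open Finset

variable {n : ℕ} {G : SimpleGraph (Fin n)}

theorem SimpleGraph.isIndepSet_coe_iff {V : Type*} {G : SimpleGraph V} {S : Finset V} :
    G.IsIndepSet (S : Set V) ↔ ∀ a ∈ S, ∀ b ∈ S, ¬G.Adj a b :=
  ⟨fun h _ ha _ hb hab => h ha hb hab.ne hab, fun h a ha b hb _ => h a ha b hb⟩

def prefixParity (S : Finset (Fin n)) (i : Fin n) : Bool :=
  decide (Odd #(S ∩ Iic i))

theorem prefixParity_eq_xor (S : Finset (Fin n)) (i : Fin n) :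
    prefixParity S i = xor (decide (Odd #(S ∩ Iio i))) (decide (i ∈ S)) := by
  rw [prefixParity, ← Iio_insert]
  by_cases hi : i ∈ S
  · rw [inter_insert_of_mem hi, card_insert_of_notMem (by simp)]
    simp [hi, Nat.odd_add_one, ← Nat.not_even_iff_odd]
  · rw [inter_insert_of_notMem hi]
    simp [hi]

theorem prefixParity_eq_ite (S : Finset (Fin n)) (i : Fin n) :
    prefixParity S i = if (i : ℕ) = 0 then decide (i ∈ S)
      else xor (prefixParity S ⟨(i : ℕ) - 1, lt_of_le_of_lt (Nat.sub_le _ _) i.isLt⟩)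
        (decide (i ∈ S)) := by
  rw [prefixParity_eq_xor]
  split_ifs with hi
  · have hempty : Iio i = ∅ := by ext j; simp [Fin.lt_def, hi]
    simp [hempty]
  · have hprev : Iio i = Iic ⟨(i : ℕ) - 1, lt_of_le_of_lt (Nat.sub_le _ _) i.isLt⟩ := by
      ext j; simp only [mem_Iio, mem_Iic, Fin.lt_def, Fin.le_def]; omega
    rw [hprev, prefixParity]

theorem prefixParity_last (hn : 0 < n) (S : Finset (Fin n)) :
    prefixParity S ⟨n - 1, Nat.sub_lt hn one_pos⟩ = decide (Odd #S) := by
  rw [prefixParity, inter_eq_left.2 fun j _ => mem_Iic.2 (Fin.le_def.2 (by simp only; omega))]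

def xSupport (σx : Fin n → Fin (n + 1) → Bool) : Finset (Fin n) :=
  {i | σx i 0 = true}

@[simp]
theorem mem_xSupport {σx : Fin n → Fin (n + 1) → Bool} {i : Fin n} :
    i ∈ xSupport σx ↔ σx i 0 = true := by
  simp [xSupport]

theorem admissible_prefixParity {S : Finset (Fin n)} (hS : G.IsIndepSet S) :
    Admissible G (fun i _ => decide (i ∈ S)) (prefixParity S) := by
  refine ⟨fun _ _ _ h => h, fun i₁ i₂ hadj _ _ ⟨h₁, h₂⟩ => ?_, prefixParity_eq_ite S⟩
  exact SimpleGraph.isIndepSet_coe_iff.1 hS i₁ (by simpa using h₁) i₂ (by simpa using h₂) hadj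

namespace Admissible

variable {σx : Fin n → Fin (n + 1) → Bool} {σy : Fin n → Bool}

theorem apply_eq_apply_zero (h : Admissible G σx σy) (i : Fin n) (j : Fin (n + 1)) :
    σx i j = σx i 0 :=
  Bool.eq_iff_iff.2 ⟨h.1 i j 0, h.1 i 0 j⟩

theorem isIndepSet_xSupport (h : Admissible G σx σy) : G.IsIndepSet (xSupport σx : Set (Fin n)) :=
  SimpleGraph.isIndepSet_coe_iff.2 fun a ha b hb hab =>
    h.2.1 a b hab 0 0 ⟨mem_xSupport.1 ha, mem_xSupport.1 hb⟩

theorem eq_prefixParity (h : Admissible G σx σy) : σy = prefixParity (xSupport σx) := by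
  suffices ∀ m (hm : m < n), σy ⟨m, hm⟩ = prefixParity (xSupport σx) ⟨m, hm⟩ from
    funext fun i => this i i.isLt
  intro m
  induction m with
  | zero => intro hm; rw [h.2.2, prefixParity_eq_ite]; simp
  | succ m ih =>
    intro hm
    rw [h.2.2, prefixParity_eq_ite]
    simp [ih (by omega)]

theorem aWeight_eq (h : Admissible G σx σy) :
    aWeight σx σy = (n + 1) * #(xSupport σx) + #{i | σy i = true} := by
  have hx : ({p | σx p.1 p.2 = true} : Finset (Fin n × Fin (n + 1))) = xSupport σx ×ˢ univ := by
    ext p; simp [h.apply_eq_apply_zero p.1 p.2]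
  rw [aWeight, hx, card_product, card_univ, Fintype.card_fin, mul_comm]

theorem card_le_card_xSupport (h : Admissible G σx σy)
    (hmax : ∀ σx' σy', Admissible G σx' σy' → aWeight σx' σy' ≤ aWeight σx σy)
    {T : Finset (Fin n)} (hT : G.IsIndepSet T) : #T ≤ #(xSupport σx) := by
  have hT' := admissible_prefixParity hT
  have hle := hmax _ _ hT'
  rw [hT'.aWeight_eq, h.aWeight_eq] at hle
  have hsuppT : xSupport (fun i (_ : Fin (n + 1)) => decide (i ∈ T)) = T := by ext; simp
  rw [hsuppT] at hle
  have hy : #{i | σy i = true} ≤ n := (card_filter_le _ _).trans (by simp)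
  by_contra! hlt
  nlinarith

end Admissible

theorem exists_admissible_forall_aWeight_le (G : SimpleGraph (Fin n)) :
    ∃ σx σy, Admissible G σx σy ∧
      ∀ σx' σy', Admissible G σx' σy' → aWeight σx' σy' ≤ aWeight σx σy := by
  classical
  obtain ⟨σ, hσ, hmax⟩ := exists_max_image
    {σ : (Fin n → Fin (n + 1) → Bool) × (Fin n → Bool) | Admissible G σ.1 σ.2}
    (fun σ => aWeight σ.1 σ.2)
    ⟨(_, _), mem_filter.2 ⟨mem_univ _, admissible_prefixParity (S := ∅) (by simp)⟩⟩
  exact ⟨σ.1, σ.2, (mem_filter.1 hσ).2, fun σx' σy' h' => hmax (σx', σy') (by simpa using h')⟩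

/-- The maximum size of an independent set of `G` is odd iff there is an admissible
assignment setting `y_n` to true whose weight is maximum among all admissible
assignments. -/
theorem stmt5 {n : ℕ} (hn : 0 < n) (G : SimpleGraph (Fin n)) :
    (∃ S : Finset (Fin n), (∀ a ∈ S, ∀ b ∈ S, ¬ G.Adj a b) ∧ Odd S.card ∧
      ∀ S' : Finset (Fin n), (∀ a ∈ S', ∀ b ∈ S', ¬ G.Adj a b) → S'.card ≤ S.card) ↔
    (∃ σx : Fin n → Fin (n+1) → Bool, ∃ σy : Fin n → Bool,
      Admissible G σx σy ∧ σy ⟨n - 1, Nat.sub_lt hn one_pos⟩ = true ∧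
      ∀ σx' σy', Admissible G σx' σy' → aWeight σx' σy' ≤ aWeight σx σy) := by
  simp_rw [← SimpleGraph.isIndepSet_coe_iff]
  constructor
  · rintro ⟨S, hS, hodd, hmaxS⟩
    obtain ⟨σx, σy, hσ, hmax⟩ := exists_admissible_forall_aWeight_le G
    have hcard : #(xSupport σx) = #S :=
      le_antisymm (hmaxS _ hσ.isIndepSet_xSupport) (hσ.card_le_card_xSupport hmax hS)
    refine ⟨σx, σy, hσ, ?_, hmax⟩
    rw [hσ.eq_prefixParity, prefixParity_last hn, hcard]
    exact decide_eq_true hodd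
  · rintro ⟨σx, σy, hσ, hlast, hmax⟩
    refine ⟨xSupport σx, hσ.isIndepSet_xSupport, ?_, fun T hT => hσ.card_le_card_xSupport hmax hT⟩
    rw [hσ.eq_prefixParity, prefixParity_last hn] at hlast
    exact of_decide_eq_true hlast
end

section
/- Let V be a finite set, A a relation on V, s a positive integer, and D, E, F pairwise disjoint subsets of V, each of size at least s, such that (d,e) ∈ A, (e,f) ∈ A, and (f,d) ∈ A for all d ∈ D, e ∈ E, f ∈ F. Then for every linear order ≺ on V, the number of pairs (u,v) ∈ (D×E) ∪ (E×F) ∪ (F×D) with v ≺ u is at least s². -/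
/-!
Pick `s`-element subsets `X ⊆ D`, `Y ⊆ E`, `Z ⊆ F`. Every one of the `s³` triangles
`(d, e, f) ∈ X × Y × Z` contains a reversed pair among `(d, e)`, `(e, f)`, `(f, d)`,
since `d ≺ e ≺ f ≺ d` is impossible. A reversed pair lies in at most `s` triangles
(one for each choice of the third vertex), so there are at least `s³ / s = s²` reversed pairs.
-/

open Finset

section ReversedPairs

variable {V : Type*} (r : V → V → Prop)

theorem IsStrictTotalOrder.rel_or_rel_or_rel_of_ne [IsStrictTotalOrder V r] {x y z : V}
    (hxy : x ≠ y) (hyz : y ≠ z) : r y x ∨ r z y ∨ r x z := by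
  by_contra! ⟨hyx, hzy, hxz⟩
  have hrxy : r x y := (trichotomous_of r x y).resolve_right (not_or.mpr ⟨hxy, hyx⟩)
  have hryz : r y z := (trichotomous_of r y z).resolve_right (not_or.mpr ⟨hyz, hzy⟩)
  exact hxz (_root_.trans hrxy hryz)

variable [DecidableRel r]

def reversedPairs (X Y : Finset V) : Finset (V × V) := {p ∈ X ×ˢ Y | r p.2 p.1}

variable {r}

theorem mem_reversedPairs {X Y : Finset V} {p : V × V} :
    p ∈ reversedPairs r X Y ↔ (p.1 ∈ X ∧ p.2 ∈ Y) ∧ r p.2 p.1 := by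
  simp [reversedPairs]

theorem disjoint_reversedPairs {X Y X' Y' : Finset V} (hX : Disjoint X X') :
    Disjoint (reversedPairs r X Y) (reversedPairs r X' Y') :=
  disjoint_left.mpr fun _ hp hp' =>
    disjoint_left.mp hX (mem_reversedPairs.mp hp).1.1 (mem_reversedPairs.mp hp').1.1

theorem card_product_product_le [DecidableEq V] [IsStrictTotalOrder V r] {X Y Z : Finset V}
    (hXY : Disjoint X Y) (hYZ : Disjoint Y Z) :
    #(X ×ˢ Y ×ˢ Z) ≤ #(reversedPairs r X Y) * #Z + #(reversedPairs r Y Z) * #X +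
      #(reversedPairs r Z X) * #Y := by
  have hcover : X ×ˢ Y ×ˢ Z ⊆
      (reversedPairs r X Y ×ˢ Z).image (fun q => (q.1.1, q.1.2, q.2)) ∪
      (reversedPairs r Y Z ×ˢ X).image (fun q => (q.2, q.1.1, q.1.2)) ∪
      (reversedPairs r Z X ×ˢ Y).image (fun q => (q.1.2, q.2, q.1.1)) := by
    rintro ⟨d, e, f⟩ ht
    simp only [mem_product] at ht
    obtain ⟨hd, he, hf⟩ := ht
    have hde : d ≠ e := fun h => disjoint_left.mp hXY hd (h ▸ he)
    have hef : e ≠ f := fun h => disjoint_left.mp hYZ he (h ▸ hf)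
    rcases IsStrictTotalOrder.rel_or_rel_or_rel_of_ne r hde hef with hed | hfe | hdf
    · exact mem_union_left _ <| mem_union_left _ <| mem_image.mpr
        ⟨((d, e), f), mem_product.mpr ⟨mem_reversedPairs.mpr ⟨⟨hd, he⟩, hed⟩, hf⟩, rfl⟩
    · exact mem_union_left _ <| mem_union_right _ <| mem_image.mpr
        ⟨((e, f), d), mem_product.mpr ⟨mem_reversedPairs.mpr ⟨⟨he, hf⟩, hfe⟩, hd⟩, rfl⟩
    · exact mem_union_right _ <| mem_image.mpr
        ⟨((f, d), e), mem_product.mpr ⟨mem_reversedPairs.mpr ⟨⟨hf, hd⟩, hdf⟩, he⟩, rfl⟩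
  have hcard_image (P : Finset (V × V)) (W : Finset V) (g : (V × V) × V → V × V × V) :
      #((P ×ˢ W).image g) ≤ #P * #W :=
    card_image_le.trans_eq (card_product _ _)
  grw [card_le_card hcover, card_union_le, card_union_le, hcard_image, hcard_image, hcard_image]

theorem sq_le_card_reversedPairs_union [DecidableEq V] [IsStrictTotalOrder V r]
    {X Y Z : Finset V} {s : ℕ}
    (hXY : Disjoint X Y) (hYZ : Disjoint Y Z) (hXZ : Disjoint X Z)
    (hX : #X = s) (hY : #Y = s) (hZ : #Z = s) :
    s ^ 2 ≤ #(reversedPairs r X Y ∪ reversedPairs r Y Z ∪ reversedPairs r Z X) := by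
  rw [card_union_of_disjoint (disjoint_union_left.mpr
      ⟨disjoint_reversedPairs hXZ, disjoint_reversedPairs hYZ⟩),
    card_union_of_disjoint (disjoint_reversedPairs hXY)]
  have hcount := card_product_product_le (r := r) hXY hYZ
  rw [card_product, card_product, hX, hY, hZ] at hcount
  rcases Nat.eq_zero_or_pos s with rfl | hs
  · simp
  · exact Nat.le_of_mul_le_mul_right (by nlinarith) hs

end ReversedPairs

theorem stmt7_general {V : Type*} [Fintype V] (s : ℕ)
    (D E F : Set V)
    (hDE : Disjoint D E) (hEF : Disjoint E F) (hDF : Disjoint D F)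
    (hD : s ≤ D.ncard) (hE : s ≤ E.ncard) (hF : s ≤ F.ncard)
    (r : V → V → Prop) (hr : IsStrictTotalOrder V r) :
    s ^ 2 ≤ {p : V × V |
        ((p.1 ∈ D ∧ p.2 ∈ E) ∨ (p.1 ∈ E ∧ p.2 ∈ F) ∨ (p.1 ∈ F ∧ p.2 ∈ D)) ∧
        r p.2 p.1}.ncard := by
  classical
  have := hr
  rw [Set.ncard_eq_toFinset_card'] at hD hE hF
  obtain ⟨X, hXD, hX⟩ := exists_subset_card_eq hD
  obtain ⟨Y, hYE, hY⟩ := exists_subset_card_eq hE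
  obtain ⟨Z, hZF, hZ⟩ := exists_subset_card_eq hF
  rw [Set.subset_toFinset] at hXD hYE hZF
  have hsq := sq_le_card_reversedPairs_union (r := r) (disjoint_coe.mp (hDE.mono hXD hYE))
    (disjoint_coe.mp (hEF.mono hYE hZF)) (disjoint_coe.mp (hDF.mono hXD hZF)) hX hY hZ
  refine hsq.trans_eq (Set.ncard_coe_finset _).symm |>.trans (Set.ncard_le_ncard ?_)
  rintro ⟨u, v⟩ hp
  simp only [coe_union, Set.mem_union, mem_coe, mem_reversedPairs] at hp
  rcases hp with (⟨⟨hu, hv⟩, hvu⟩ | ⟨⟨hu, hv⟩, hvu⟩) | ⟨⟨hu, hv⟩, hvu⟩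
  · exact ⟨Or.inl ⟨hXD hu, hYE hv⟩, hvu⟩
  · exact ⟨Or.inr (Or.inl ⟨hYE hu, hZF hv⟩), hvu⟩
  · exact ⟨Or.inr (Or.inr ⟨hZF hu, hXD hv⟩), hvu⟩

/-- In any linear order, at least `s²` of the pairs of `(D×E) ∪ (E×F) ∪ (F×D)`
(which are all arcs of `A`) are reversed. -/
theorem stmt7 {V : Type*} [Fintype V] (A : V → V → Prop) (s : ℕ) (hs : 0 < s)
    (D E F : Set V)
    (hDE : Disjoint D E) (hEF : Disjoint E F) (hDF : Disjoint D F)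
    (hD : s ≤ D.ncard) (hE : s ≤ E.ncard) (hF : s ≤ F.ncard)
    (hADE : ∀ d ∈ D, ∀ e ∈ E, A d e) (hAEF : ∀ e ∈ E, ∀ f ∈ F, A e f)
    (hAFD : ∀ f ∈ F, ∀ d ∈ D, A f d)
    (r : V → V → Prop) (hr : IsStrictTotalOrder V r) :
    s ^ 2 ≤ {p : V × V |
        ((p.1 ∈ D ∧ p.2 ∈ E) ∨ (p.1 ∈ E ∧ p.2 ∈ F) ∨ (p.1 ∈ F ∧ p.2 ∈ D)) ∧
        r p.2 p.1}.ncard :=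
  stmt7_general s D E F hDE hEF hDF hD hE hF r hr
end

section
/- Let V be a finite set and X ⊆ V×V an irreflexive set of ordered pairs. Suppose there is a set C ⊆ V of 'centers' such that: every pair in X has exactly one endpoint in C; every vertex of V∖C occurs as an endpoint of at most one pair of X; and for each c ∈ C, either all pairs of X incident to c have c as their first coordinate, or all have c as their second coordinate. Then there exist two strict linear orders <₁ and <₂ on V such that for all distinct a, b ∈ V: (a,b) ∈ X if and only if a <₁ b and a <₂ b. -/
/-!
Ordering every vertex by the key (center of its star, tag, vertex), with tag 0 for a source
center, 1 for a non-center and 2 for a target center, and a second time by the same key with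
the first and last components reversed, the two orders agree exactly on pairs in a common star
whose tags increase, and these are the pairs of `X`.
-/

open OrderDual Function

section Lex

variable {α β γ : Type*} [LinearOrder α] [LinearOrder β] [LinearOrder γ]

theorem toLex_lt_and_toLex_toDual_lt_iff {a₁ a₂ : α} {b₁ b₂ : β} {c₁ c₂ : γ} :
    toLex (a₁, toLex (b₁, c₁)) < toLex (a₂, toLex (b₂, c₂)) ∧
        toLex (toDual a₁, toLex (b₁, toDual c₁)) < toLex (toDual a₂, toLex (b₂, toDual c₂)) ↔
      a₁ = a₂ ∧ b₁ < b₂ := by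
  simp only [Prod.Lex.toLex_lt_toLex, toDual_lt_toDual, toDual_inj]
  constructor
  · rintro ⟨h₁ | ⟨rfl, h₁⟩, h₂ | ⟨ha, h₂⟩⟩
    · exact absurd h₁ (lt_asymm h₂)
    · exact absurd h₁ ha.not_lt
    · exact absurd h₂ (lt_irrefl _)
    · refine ⟨rfl, h₁.resolve_right fun ⟨hb, hc₁⟩ => ?_⟩
      rcases h₂ with hb' | ⟨-, hc₂⟩
      exacts [hb.not_lt hb', lt_asymm hc₁ hc₂]
  · rintro ⟨rfl, hb⟩
    exact ⟨Or.inr ⟨rfl, Or.inl hb⟩, Or.inr ⟨rfl, Or.inl hb⟩⟩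

theorem exists_isStrictTotalOrder_pair_of_mem_iff {V : Type*} [LinearOrder V]
    (X : Set (V × V)) (R : V → α) (t : V → β)
    (hX : ∀ a b, a ≠ b → ((a, b) ∈ X ↔ R a = R b ∧ t a < t b)) :
    ∃ r₁ r₂ : V → V → Prop, IsStrictTotalOrder V r₁ ∧ IsStrictTotalOrder V r₂ ∧
      ∀ a b : V, a ≠ b → ((a, b) ∈ X ↔ (r₁ a b ∧ r₂ a b)) := by
  let key₁ : V → α ×ₗ β ×ₗ V := fun v => toLex (R v, toLex (t v, v))
  let key₂ : V → αᵒᵈ ×ₗ β ×ₗ Vᵒᵈ := fun v => toLex (toDual (R v), toLex (t v, toDual v))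
  have hkey₁ : key₁.Injective := fun a b h => by simp_all [key₁]
  have hkey₂ : key₂.Injective := fun a b h => by simp_all [key₂]
  refine ⟨(· < ·) on key₁, (· < ·) on key₂, hkey₁.isStrictTotalOrder_onFun _,
    hkey₂.isStrictTotalOrder_onFun _, fun a b hab => ?_⟩
  rw [hX a b hab]
  exact toLex_lt_and_toLex_toDual_lt_iff.symm

end Lex

section Star

variable {V : Type*} {X : Set (V × V)} {C : Set V}

open Classical in
noncomputable def starCenter (X : Set (V × V)) (C : Set V) (v : V) : V :=
  if h : ∃ c ∈ C, (c, v) ∈ X ∨ (v, c) ∈ X then h.choose else v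

open Classical in
noncomputable def starTag (X : Set (V × V)) (C : Set V) (v : V) : ℕ :=
  if v ∉ C then 1 else if ∃ a, (a, v) ∈ X then 2 else 0

theorem starCenter_mem_or_mem {v : V} (hv : starCenter X C v ≠ v) :
    (starCenter X C v, v) ∈ X ∨ (v, starCenter X C v) ∈ X := by
  unfold starCenter at hv ⊢
  split_ifs at hv ⊢ with h
  exacts [h.choose_spec.2, absurd rfl hv]

theorem starTag_of_notMem {v : V} (hv : v ∉ C) : starTag X C v = 1 := by
  simp [starTag, hv]

theorem starTag_of_snd_mem {a c : V} (hc : c ∈ C) (hac : (a, c) ∈ X) : starTag X C c = 2 := by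
  simp only [starTag, hc, not_true_eq_false, if_false]
  exact if_pos ⟨a, hac⟩

variable (hone : ∀ p ∈ X, (p.1 ∈ C ∧ p.2 ∉ C) ∨ (p.1 ∉ C ∧ p.2 ∈ C))
include hone

theorem starCenter_of_mem {v : V} (hv : v ∈ C) : starCenter X C v = v := by
  rw [starCenter, dif_neg]
  rintro ⟨c, hc, h | h⟩
  · simpa [hc, hv] using hone _ h
  · simpa [hc, hv] using hone _ h

theorem starCenter_eq
    (hdeg : ∀ v : V, v ∉ C → ∀ p ∈ X, ∀ q ∈ X,
      (p.1 = v ∨ p.2 = v) → (q.1 = v ∨ q.2 = v) → p = q)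
    {c v : V} (hc : c ∈ C) (hcv : (c, v) ∈ X ∨ (v, c) ∈ X) : starCenter X C v = c := by
  have hv : v ∉ C := by rcases hcv with h | h <;> simpa [hc] using hone _ h
  have h : ∃ c ∈ C, (c, v) ∈ X ∨ (v, c) ∈ X := ⟨c, hc, hcv⟩
  obtain ⟨hc', hc'v⟩ := h.choose_spec
  rw [starCenter, dif_pos h]
  rcases hc'v with h₁ | h₁ <;> rcases hcv with h₂ | h₂ <;>
    have := hdeg v hv _ h₁ _ h₂ (by simp) (by simp) <;> simp_all

theorem starTag_of_fst_mem
    (hstar : ∀ c ∈ C, (∀ p ∈ X, (p.1 = c ∨ p.2 = c) → p.1 = c) ∨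
                      (∀ p ∈ X, (p.1 = c ∨ p.2 = c) → p.2 = c))
    {b c : V} (hc : c ∈ C) (hcb : (c, b) ∈ X) : starTag X C c = 0 := by
  have hloop : (c, c) ∉ X := fun h => by simpa using hone _ h
  have hin : ¬∃ a, (a, c) ∈ X := by
    rintro ⟨a, hac⟩
    rcases hstar c hc with h | h
    · exact hloop (h _ hac (Or.inr rfl) ▸ hac)
    · exact hloop (h _ hcb (Or.inl rfl) ▸ hcb)
  simp [starTag, hc, hin]

theorem mem_iff_starCenter_eq_and_starTag_lt
    (hdeg : ∀ v : V, v ∉ C → ∀ p ∈ X, ∀ q ∈ X,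
      (p.1 = v ∨ p.2 = v) → (q.1 = v ∨ q.2 = v) → p = q)
    (hstar : ∀ c ∈ C, (∀ p ∈ X, (p.1 = c ∨ p.2 = c) → p.1 = c) ∨
                      (∀ p ∈ X, (p.1 = c ∨ p.2 = c) → p.2 = c))
    {a b : V} (hab : a ≠ b) :
    (a, b) ∈ X ↔ starCenter X C a = starCenter X C b ∧ starTag X C a < starTag X C b := by
  constructor
  · intro h
    rcases hone _ h with ⟨ha, hb⟩ | ⟨ha, hb⟩
    · rw [starCenter_of_mem hone ha, starCenter_eq hone hdeg ha (Or.inl h),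
        starTag_of_fst_mem hone hstar ha h, starTag_of_notMem hb]
      exact ⟨rfl, one_pos⟩
    · rw [starCenter_eq hone hdeg hb (Or.inr h), starCenter_of_mem hone hb,
        starTag_of_notMem ha, starTag_of_snd_mem hb h]
      exact ⟨rfl, one_lt_two⟩
  · rintro ⟨hR, ht⟩
    by_cases ha : a ∈ C <;> by_cases hb : b ∈ C
    · rw [starCenter_of_mem hone ha, starCenter_of_mem hone hb] at hR
      exact absurd hR hab
    · rw [starCenter_of_mem hone ha] at hR
      have hRb : starCenter X C b ≠ b := hR ▸ hab
      rcases hR ▸ starCenter_mem_or_mem hRb with h | h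
      · exact h
      · rw [starTag_of_snd_mem ha h, starTag_of_notMem hb] at ht
        omega
    · rw [starCenter_of_mem hone hb] at hR
      rcases hR ▸ starCenter_mem_or_mem (hR ▸ hab.symm) with h | h
      · rw [starTag_of_fst_mem hone hstar hb h, starTag_of_notMem ha] at ht
        omega
      · exact h
    · rw [starTag_of_notMem ha, starTag_of_notMem hb] at ht
      exact absurd ht (lt_irrefl 1)

end Star

theorem stmt8_general {V : Type*} (X : Set (V × V)) (C : Set V)
    (hone : ∀ p ∈ X, (p.1 ∈ C ∧ p.2 ∉ C) ∨ (p.1 ∉ C ∧ p.2 ∈ C))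
    (hdeg : ∀ v : V, v ∉ C → ∀ p ∈ X, ∀ q ∈ X,
      (p.1 = v ∨ p.2 = v) → (q.1 = v ∨ q.2 = v) → p = q)
    (hstar : ∀ c ∈ C, (∀ p ∈ X, (p.1 = c ∨ p.2 = c) → p.1 = c) ∨
                      (∀ p ∈ X, (p.1 = c ∨ p.2 = c) → p.2 = c)) :
    ∃ r₁ r₂ : V → V → Prop, IsStrictTotalOrder V r₁ ∧ IsStrictTotalOrder V r₂ ∧
      ∀ a b : V, a ≠ b → ((a, b) ∈ X ↔ (r₁ a b ∧ r₂ a b)) := by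
  let : LinearOrder V := WellOrderingRel.isWellOrder.linearOrder
  exact exists_isStrictTotalOrder_pair_of_mem_iff X (starCenter X C) (starTag X C)
    fun _ _ hab => mem_iff_starCenter_eq_and_starTag_lt hone hdeg hstar hab

/-- If the irreflexive pair set `X` is a union of stars centered at `C` (every pair has
exactly one endpoint in `C`, non-centers are in at most one pair, and each center is
consistently a source or consistently a target), then `X` is induced by two strict
linear orders: `(a,b) ∈ X` iff `a` precedes `b` in both. -/
theorem stmt8 {V : Type*} [Fintype V] (X : Set (V × V))
    (hirr : ∀ a : V, (a, a) ∉ X) (C : Set V)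
    (hone : ∀ p ∈ X, (p.1 ∈ C ∧ p.2 ∉ C) ∨ (p.1 ∉ C ∧ p.2 ∈ C))
    (hdeg : ∀ v : V, v ∉ C → ∀ p ∈ X, ∀ q ∈ X,
      (p.1 = v ∨ p.2 = v) → (q.1 = v ∨ q.2 = v) → p = q)
    (hstar : ∀ c ∈ C, (∀ p ∈ X, (p.1 = c ∨ p.2 = c) → p.1 = c) ∨
                      (∀ p ∈ X, (p.1 = c ∨ p.2 = c) → p.2 = c)) :
    ∃ r₁ r₂ : V → V → Prop, IsStrictTotalOrder V r₁ ∧ IsStrictTotalOrder V r₂ ∧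
      ∀ a b : V, a ≠ b → ((a, b) ∈ X ↔ (r₁ a b ∧ r₂ a b)) :=
  stmt8_general X C hone hdeg hstar
end

section
/- There exists a linear order on the vertices of T_φ whose implied feedback arc set has size at most n·s₁² + (3n−1)m·s₁·s₂ + 3n·s₁ + m²·s₂² + 9m(n−1)·s₂. -/
/-! ### The tournament `T_φ` of the reduction

A CNF formula `φ` with variables `x_1, …, x_n` and clauses `c_1, …, c_m` in which no
variable occurs twice in a clause is given by its occurrence function
`occ : Fin n → Fin m → Option Bool`, where `occ i j = some true` (resp. `some false`)
means `x_i` occurs positively (resp. negatively) in `c_j`, and `none` means `x_i`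
does not occur in `c_j`. -/

/-- The names of the `6n + m` modules of the tournament `T_φ`. -/
inductive ModName (n m : ℕ) : Type where
  | A : Fin n → ModName n m
  | B : Fin n → ModName n m
  | C : Fin n → ModName n m
  | D : Fin n → ModName n m
  | E : Fin n → ModName n m
  | F : Fin n → ModName n m
  | T : Fin m → ModName n m
  deriving DecidableEq, Fintype

/-- The group (variable index) of a module, if it is a variable module. -/
def grp? {n m : ℕ} : ModName n m → Option (Fin n)
  | .A i => some i
  | .B i => some i
  | .C i => some i
  | .D i => some i
  | .E i => some i
  | .F i => some i
  | .T _ => none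

/-- The clause index of a module, if it is a clause module. -/
def clause? {n m : ℕ} : ModName n m → Option (Fin m)
  | .T j => some j
  | _ => none

/-- The rank of a module within its group: `A = 0, B = 1, C = 2, D = 3, E = 4, F = 5`. -/
def rk {n m : ℕ} : ModName n m → ℕ
  | .A _ => 0
  | .B _ => 1
  | .C _ => 2
  | .D _ => 3
  | .E _ => 4
  | .F _ => 5
  | .T _ => 6

/-- The size of each module: `A_i, B_i, C_i, D_i, F_i` have size `s₁`; `E_i` has size
`s₁ + 2` for `i < n` and `s₁ + 3` for `i = n` (i.e. index `n - 1`); `T_j` has size `s₂`. -/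
def msize (n m s₁ s₂ : ℕ) : ModName n m → ℕ
  | .A _ => s₁
  | .B _ => s₁
  | .C _ => s₁
  | .D _ => s₁
  | .E i => if (i : ℕ) = n - 1 then s₁ + 3 else s₁ + 2
  | .F _ => s₁
  | .T _ => s₂

/-- The vertex set of `T_φ`: a vertex is a module name together with an index inside
the module. -/
abbrev Vtx (n m s₁ s₂ : ℕ) : Type := Σ M : ModName n m, Fin (msize n m s₁ s₂ M)

/-- Whether all arcs go from `T_j` to the variable module of rank `r` of a group `i`
with `occ i j = o`: if `x_i` does not occur in `c_j`, `T_j` beats `A_i ∪ B_i ∪ C_i`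
(ranks 0,1,2); if positively, `T_j` beats `A_i ∪ B_i ∪ F_i` (ranks 0,1,5); if
negatively, `T_j` beats `A_i ∪ C_i ∪ D_i` (ranks 0,2,3). -/
def tBeats : Option Bool → ℕ → Prop
  | none, r => r = 0 ∨ r = 1 ∨ r = 2
  | some true, r => r = 0 ∨ r = 1 ∨ r = 5
  | some false, r => r = 0 ∨ r = 2 ∨ r = 3

/-- The direction of the arcs between two distinct modules of `T_φ`. -/
def modArc {n m : ℕ} (occ : Fin n → Fin m → Option Bool) (M M' : ModName n m) : Prop :=
  (∃ i i' : Fin n, grp? M = some i ∧ grp? M' = some i' ∧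
    (i < i' ∨ (i = i' ∧ ((rk M < rk M' ∧ ¬(rk M = 3 ∧ rk M' = 5)) ∨
      (rk M = 5 ∧ rk M' = 3))))) ∨
  (∃ j j' : Fin m, clause? M = some j ∧ clause? M' = some j' ∧ j < j') ∨
  (∃ j : Fin m, ∃ i : Fin n, clause? M = some j ∧ grp? M' = some i ∧
    tBeats (occ i j) (rk M')) ∨
  (∃ i : Fin n, ∃ j : Fin m, grp? M = some i ∧ clause? M' = some j ∧
    ¬ tBeats (occ i j) (rk M))

/-- The arc relation of the tournament `T_φ`: inside a module, arcs follow the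
transitive order of the indices; between distinct modules, arcs are given by `modArc`. -/
def arc {n m s₁ s₂ : ℕ} (occ : Fin n → Fin m → Option Bool) :
    Vtx n m s₁ s₂ → Vtx n m s₁ s₂ → Prop :=
  fun u v => (u.1 = v.1 ∧ (u.2 : ℕ) < (v.2 : ℕ)) ∨ (u.1 ≠ v.1 ∧ modArc occ u.1 v.1)

/-- The set of vertices of a module. -/
def mset {n m s₁ s₂ : ℕ} (M : ModName n m) : Set (Vtx n m s₁ s₂) := {v | v.1 = M}

/-- The set of vertices of group `i`: `A_i ∪ B_i ∪ C_i ∪ D_i ∪ E_i ∪ F_i`. -/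
def gset {n m s₁ s₂ : ℕ} (i : Fin n) : Set (Vtx n m s₁ s₂) := {v | grp? v.1 = some i}

/-- The sink of the transitive tournament induced by the module `F_n`. -/
def fnSink (n m s₁ s₂ : ℕ) (hn : 0 < n) (hs₁ : 0 < s₁) : Vtx n m s₁ s₂ :=
  ⟨.F ⟨n - 1, Nat.sub_lt hn one_pos⟩, ⟨s₁ - 1, Nat.sub_lt hs₁ one_pos⟩⟩

/-- The assignment `σ` satisfies clause `c_j`. -/
def SatClause {n m : ℕ} (occ : Fin n → Fin m → Option Bool) (σ : Fin n → Bool)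
    (j : Fin m) : Prop :=
  ∃ i : Fin n, (occ i j = some true ∧ σ i = true) ∨ (occ i j = some false ∧ σ i = false)

/-- The assignment `σ` satisfies `φ`. -/
def Sat {n m : ℕ} (occ : Fin n → Fin m → Option Bool) (σ : Fin n → Bool) : Prop :=
  ∀ j : Fin m, SatClause occ σ j

/-- The weight of a truth assignment: the number of variables set to `true`. -/
def wt {n : ℕ} (σ : Fin n → Bool) : ℕ := (Finset.univ.filter (fun i => σ i = true)).card

/-- Every element of `S` comes before every element of `S'` in the order `r`. -/
def Before {V : Type*} (r : V → V → Prop) (S S' : Set V) : Prop := ∀ u ∈ S, ∀ v ∈ S', r u v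

/-- A linear order on the vertices of `T_φ` is structured if every module is contiguous,
groups appear in increasing order, within each group `A_i ≺ B_i ≺ C_i` come before
`D_i ∪ E_i ∪ F_i`, and the last three modules appear in one of the cyclic orders
`D_i ≺ E_i ≺ F_i`, `E_i ≺ F_i ≺ D_i`, `F_i ≺ D_i ≺ E_i`. -/
def Structured {n m s₁ s₂ : ℕ} (r : Vtx n m s₁ s₂ → Vtx n m s₁ s₂ → Prop) : Prop :=
  (∀ M : ModName n m, Contig r (mset M)) ∧
  (∀ i i' : Fin n, i < i' → Before r (gset i) (gset i')) ∧
  (∀ i : Fin n,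
    Before r (mset (.A i)) (mset (.B i)) ∧
    Before r (mset (.B i)) (mset (.C i)) ∧
    Before r (mset (.A i) ∪ mset (.B i) ∪ mset (.C i))
      (mset (.D i) ∪ mset (.E i) ∪ mset (.F i))) ∧
  (∀ i : Fin n,
    (Before r (mset (.D i)) (mset (.E i)) ∧ Before r (mset (.E i)) (mset (.F i))) ∨
    (Before r (mset (.E i)) (mset (.F i)) ∧ Before r (mset (.F i)) (mset (.D i))) ∨
    (Before r (mset (.F i)) (mset (.D i)) ∧ Before r (mset (.D i)) (mset (.E i))))

/-- `σ` is the assignment extracted from the structured order `r`: `x_i` is set to true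
iff `D_i ≺ E_i ≺ F_i`. -/
def Extracted {n m s₁ s₂ : ℕ} (r : Vtx n m s₁ s₂ → Vtx n m s₁ s₂ → Prop)
    (σ : Fin n → Bool) : Prop :=
  ∀ i : Fin n, σ i = true ↔
    (Before r (mset (.D i)) (mset (.E i)) ∧ Before r (mset (.E i)) (mset (.F i)))


/-! Order the groups increasingly and, inside group `i`, place `A_i, B_i, C_i, E_i, F_i`, then
the clause modules `T_j` for which `x_i` is a chosen negative literal of `c_j` (ordered by `j`),
then `D_i`; every module is ordered internally by its indices. The backward arcs then only join
`D_i` to `E_i`, two clause modules, `T_j` to the three modules of each other group lying on the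
wrong side of `T_j`, or `T_j` to `A_i` and `C_i` of its own group. Counting these pairs of
modules, with `|E_i| ≤ s₁ + 3`, gives the bound. -/

open Finset

section Counting

variable {β : Type*}

theorem sum_union_le_add [DecidableEq β] (s t : Finset β) (f : β → ℕ) :
    ∑ x ∈ s ∪ t, f x ≤ ∑ x ∈ s, f x + ∑ x ∈ t, f x := by
  rw [← sum_union_inter]
  exact Nat.le_add_right _ _

theorem sum_le_mul_of_card_le {s : Finset β} {f : β → ℕ} {k c : ℕ} (hs : #s ≤ k)
    (hf : ∀ x ∈ s, f x ≤ c) : ∑ x ∈ s, f x ≤ k * c :=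
  (sum_le_card_nsmul s f c hf).trans (Nat.mul_le_mul_right c hs)

end Counting

section Blowup

variable {ι α : Type*} {size : ι → ℕ}

def blowupArc (R : ι → ι → Prop) (u v : Σ i, Fin (size i)) : Prop :=
  (u.1 = v.1 ∧ (u.2 : ℕ) < (v.2 : ℕ)) ∨ (u.1 ≠ v.1 ∧ R u.1 v.1)

def blowupKey (key : ι → α) (v : Σ i, Fin (size i)) : α ×ₗ ℕ :=
  toLex (key v.1, (v.2 : ℕ))

theorem blowupKey_injective {key : ι → α} (hkey : Function.Injective key) :
    Function.Injective (blowupKey (size := size) key) := by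
  rintro ⟨i, a⟩ ⟨i', a'⟩ h
  simp only [blowupKey, toLex_inj, Prod.mk.injEq] at h
  obtain rfl := hkey h.1
  simp [Fin.ext h.2]

variable [LinearOrder α]

theorem isStrictTotalOrder_blowupKey {key : ι → α} (hkey : Function.Injective key) :
    IsStrictTotalOrder (Σ i, Fin (size i)) (fun u v => blowupKey key u < blowupKey key v) :=
  (RelEmbedding.preimage ⟨_, blowupKey_injective hkey⟩ (· < ·)).isStrictTotalOrder

theorem ncard_fasSet_blowupKey_le {R : ι → ι → Prop} {key : ι → α}
    (hkey : Function.Injective key) (S : Finset (ι × ι))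
    (hS : ∀ i i', R i i' → key i' < key i → (i, i') ∈ S) :
    (fasSet (blowupArc (size := size) R)
        (fun u v => blowupKey key u < blowupKey key v)).ncard ≤
      ∑ p ∈ S, size p.1 * size p.2 := by
  classical
  let block : ι → Finset (Σ i, Fin (size i)) := fun i =>
    univ.map ⟨Sigma.mk i, sigma_mk_injective⟩
  let cover := S.biUnion fun p => block p.1 ×ˢ block p.2
  have hsub : fasSet (blowupArc (size := size) R)
      (fun u v => blowupKey key u < blowupKey key v) ⊆ (cover : Set _) := by
    rintro ⟨⟨i, a⟩, ⟨i', a'⟩⟩ ⟨harc, hlt⟩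
    simp only [blowupArc, blowupKey, Prod.Lex.toLex_lt_toLex] at harc hlt
    have hR : R i i' ∧ key i' < key i := by
      rcases harc with ⟨rfl, ha⟩ | ⟨hne, hR⟩
      · simp only [lt_irrefl, false_or, true_and] at hlt
        omega
      · exact ⟨hR, hlt.resolve_right fun h => hne (hkey h.1).symm⟩
    simp only [cover, coe_biUnion, Set.mem_iUnion, coe_product, Set.mem_prod, mem_coe, block,
      mem_map, mem_univ, true_and, Function.Embedding.coeFn_mk]
    exact ⟨(i, i'), hS i i' hR.1 hR.2, ⟨a, rfl⟩, ⟨a', rfl⟩⟩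
  calc _ ≤ #cover := by
        rw [← Set.ncard_coe_finset]; exact Set.ncard_le_ncard hsub
    _ ≤ ∑ p ∈ S, #(block p.1 ×ˢ block p.2) := card_biUnion_le
    _ = ∑ p ∈ S, size p.1 * size p.2 := by simp [block]

end Blowup

namespace ModName

variable {n m s₁ s₂ : ℕ}

def slot (nv : Fin m → Fin n) : ModName n m → ℕ
  | A i => 7 * i
  | B i => 7 * i + 1
  | C i => 7 * i + 2
  | E i => 7 * i + 3
  | F i => 7 * i + 4
  | T j => 7 * nv j + 5
  | D i => 7 * i + 6

def key (nv : Fin m → Fin n) (M : ModName n m) : ℕ ×ₗ ℕ :=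
  toLex (slot nv M, match M with | T j => (j : ℕ) | _ => 0)

theorem key_injective (nv : Fin m → Fin n) : Function.Injective (key nv) := by
  intro M M' h
  simp only [key, toLex_inj, Prod.mk.injEq] at h
  cases M <;> cases M' <;> simp_all [slot, Fin.ext_iff] <;> omega

theorem slot_le_of_key_lt {nv : Fin m → Fin n} {M M' : ModName n m}
    (h : key nv M < key nv M') : slot nv M ≤ slot nv M' := by
  simp only [key, Prod.Lex.toLex_lt_toLex] at h
  omega

theorem slot_mem_Icc {nv : Fin m → Fin n} {X : ModName n m} {i : Fin n}
    (h : grp? X = some i) : slot nv X ∈ Icc (7 * (i : ℕ)) (7 * i + 6) := by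
  rw [mem_Icc]
  cases X <;> simp only [grp?, Option.some.injEq, reduceCtorEq] at h <;> subst h <;>
    simp only [slot] <;> omega

theorem eq_T_of_clause? {M : ModName n m} {j : Fin m} (h : clause? M = some j) :
    M = T j := by
  cases M <;> simp_all [clause?]

def beatenBy : Option Bool → Fin n → Finset (ModName n m)
  | none, i => {A i, B i, C i}
  | some true, i => {A i, B i, F i}
  | some false, i => {A i, C i, D i}

def unbeatenBy : Option Bool → Fin n → Finset (ModName n m)
  | none, i => {D i, E i, F i}
  | some true, i => {C i, D i, E i}
  | some false, i => {B i, E i, F i}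

theorem mem_beatenBy {o : Option Bool} {i : Fin n} {X : ModName n m} :
    X ∈ beatenBy o i ↔ grp? X = some i ∧ tBeats o (rk X) := by
  rcases o with _ | _ | _ <;> cases X <;> simp [beatenBy, grp?, tBeats, rk, eq_comm]

theorem mem_unbeatenBy {o : Option Bool} {i : Fin n} {X : ModName n m} :
    X ∈ unbeatenBy o i ↔ grp? X = some i ∧ ¬ tBeats o (rk X) := by
  rcases o with _ | _ | _ <;> cases X <;> simp [unbeatenBy, grp?, tBeats, rk, eq_comm]

theorem card_beatenBy_le (o : Option Bool) (i : Fin n) :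
    #(beatenBy (m := m) o i) ≤ 3 := by
  rcases o with _ | _ | _ <;> exact card_le_three

theorem card_unbeatenBy_le (o : Option Bool) (i : Fin n) :
    #(unbeatenBy (m := m) o i) ≤ 3 := by
  rcases o with _ | _ | _ <;> exact card_le_three

theorem msize_le_of_grp? {X : ModName n m} {i : Fin n} (h : grp? X = some i) :
    msize n m s₁ s₂ X ≤ s₁ + 3 := by
  cases X <;> simp only [grp?, reduceCtorEq] at h <;> simp only [msize] <;>
    first | omega | split_ifs <;> omega

end ModName

section BackwardPairs

open ModName

variable {n m s₁ s₂ : ℕ}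

def dePairs (n m : ℕ) : Finset (ModName n m × ModName n m) :=
  univ.image fun i => (D i, E i)

def clausePairs (n m : ℕ) : Finset (ModName n m × ModName n m) :=
  univ.image fun p : Fin m × Fin m => (T p.1, T p.2)

def crossPairs (occ : Fin n → Fin m → Option Bool) (nv : Fin m → Fin n) :
    Finset (ModName n m × ModName n m) :=
  univ.biUnion fun j => (univ.erase (nv j)).biUnion fun i =>
    if i < nv j then (beatenBy (occ i j) i).image (T j, ·)
    else (unbeatenBy (occ i j) i).image (·, T j)

def ownGroupPairs (nv : Fin m → Fin n) : Finset (ModName n m × ModName n m) :=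
  (univ.image fun j => (T j, A (nv j))) ∪ univ.image fun j => (T j, C (nv j))

def backwardPairs (occ : Fin n → Fin m → Option Bool) (nv : Fin m → Fin n) :
    Finset (ModName n m × ModName n m) :=
  dePairs n m ∪ clausePairs n m ∪ crossPairs occ nv ∪ ownGroupPairs nv

theorem mem_backwardPairs {occ : Fin n → Fin m → Option Bool} {nv : Fin m → Fin n}
    (hnv : ∀ j, occ (nv j) j = some false) {M M' : ModName n m} (harc : modArc occ M M')
    (hkey : key nv M' < key nv M) :
    (M, M') ∈ backwardPairs occ nv := by
  have hslot := slot_le_of_key_lt hkey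
  simp only [backwardPairs, mem_union]
  rcases harc with ⟨i, i', hg, hg', hcase⟩ | ⟨j, j', hc, hc', -⟩ | ⟨j, i, hc, hg, htb⟩ |
    ⟨i, j, hg, hc, htb⟩
  · obtain ⟨hi, hi'⟩ := mem_Icc.1 (slot_mem_Icc (nv := nv) hg)
    obtain ⟨hj, hj'⟩ := mem_Icc.1 (slot_mem_Icc (nv := nv) hg')
    rcases hcase with hlt | ⟨rfl, hrk⟩
    · exact absurd hlt (by rw [Fin.lt_def]; omega)
    · left; left; left
      cases M <;> cases M' <;> simp only [grp?, Option.some.injEq, reduceCtorEq] at hg hg' <;>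
        subst hg hg' <;> simp_all [rk, slot, dePairs]
  · left; left; right
    rw [eq_T_of_clause? hc, eq_T_of_clause? hc']
    exact mem_image_of_mem _ (mem_univ (j, j'))
  · obtain rfl := eq_T_of_clause? hc
    obtain ⟨hi, hi'⟩ := mem_Icc.1 (slot_mem_Icc (nv := nv) hg)
    rw [show slot nv (T j) = 7 * (nv j : ℕ) + 5 from rfl] at hslot
    rcases eq_or_ne i (nv j) with rfl | hne
    · right
      rw [hnv] at htb
      cases M' <;> simp only [grp?, Option.some.injEq, reduceCtorEq] at hg <;> subst hg <;>
        simp_all [tBeats, rk, slot, ownGroupPairs]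
    · left; right
      have hlt : i < nv j := lt_of_le_of_ne (by rw [Fin.le_def]; omega) hne
      simp only [crossPairs, mem_biUnion]
      refine ⟨j, mem_univ _, i, mem_erase.2 ⟨hne, mem_univ _⟩, ?_⟩
      rw [if_pos hlt]
      exact mem_image_of_mem _ (mem_beatenBy.2 ⟨hg, htb⟩)
  · obtain rfl := eq_T_of_clause? hc
    obtain ⟨hi, hi'⟩ := mem_Icc.1 (slot_mem_Icc (nv := nv) hg)
    rw [show slot nv (T j) = 7 * (nv j : ℕ) + 5 from rfl] at hslot
    rcases eq_or_ne i (nv j) with rfl | hne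
    · exfalso
      rw [hnv] at htb
      cases M <;> simp only [grp?, Option.some.injEq, reduceCtorEq] at hg <;> subst hg <;>
        simp_all [tBeats, rk, slot]
    · left; right
      have hlt : nv j < i := lt_of_le_of_ne (by rw [Fin.le_def]; omega) hne.symm
      simp only [crossPairs, mem_biUnion]
      refine ⟨j, mem_univ _, i, mem_erase.2 ⟨hne, mem_univ _⟩, ?_⟩
      rw [if_neg (not_lt.2 hlt.le)]
      exact mem_image_of_mem _ (mem_unbeatenBy.2 ⟨hg, htb⟩)

theorem sum_dePairs_le :
    ∑ p ∈ dePairs n m, msize n m s₁ s₂ p.1 * msize n m s₁ s₂ p.2 ≤ n * (s₁ * (s₁ + 3)) := by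
  refine sum_le_mul_of_card_le (card_image_le.trans (by simp)) ?_
  simp only [dePairs, mem_image, mem_univ, true_and, forall_exists_index]
  rintro _ i rfl
  exact Nat.mul_le_mul_left _ (msize_le_of_grp? rfl)

theorem sum_clausePairs_le :
    ∑ p ∈ clausePairs n m, msize n m s₁ s₂ p.1 * msize n m s₁ s₂ p.2 ≤ m * m * (s₂ * s₂) := by
  refine sum_le_mul_of_card_le (card_image_le.trans (by simp)) ?_
  simp only [clausePairs, mem_image, mem_univ, true_and, forall_exists_index]
  rintro _ p rfl
  rfl

theorem card_crossPairs_le (occ : Fin n → Fin m → Option Bool) (nv : Fin m → Fin n) :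
    #(crossPairs occ nv) ≤ m * ((n - 1) * 3) := by
  refine (card_biUnion_le_card_mul _ _ ((n - 1) * 3) fun j _ => ?_).trans (by simp)
  refine (card_biUnion_le_card_mul _ _ 3 fun i _ => ?_).trans (by simp)
  split_ifs
  · exact card_image_le.trans (card_beatenBy_le _ _)
  · exact card_image_le.trans (card_unbeatenBy_le _ _)

theorem sum_crossPairs_le (occ : Fin n → Fin m → Option Bool) (nv : Fin m → Fin n) :
    ∑ p ∈ crossPairs occ nv, msize n m s₁ s₂ p.1 * msize n m s₁ s₂ p.2 ≤
      m * ((n - 1) * 3) * (s₂ * (s₁ + 3)) := by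
  refine sum_le_mul_of_card_le (card_crossPairs_le occ nv) ?_
  simp only [crossPairs, mem_biUnion, mem_univ, true_and]
  rintro _ ⟨j, i, -, hp⟩
  split_ifs at hp <;> obtain ⟨X, hX, rfl⟩ := mem_image.1 hp
  · exact Nat.mul_le_mul_left _ (msize_le_of_grp? (mem_beatenBy.1 hX).1)
  · rw [Nat.mul_comm]
    exact Nat.mul_le_mul_left _ (msize_le_of_grp? (mem_unbeatenBy.1 hX).1)

theorem sum_ownGroupPairs_le (nv : Fin m → Fin n) :
    ∑ p ∈ ownGroupPairs nv, msize n m s₁ s₂ p.1 * msize n m s₁ s₂ p.2 ≤ (m + m) * (s₂ * s₁) := by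
  refine sum_le_mul_of_card_le ((card_union_le _ _).trans
    (Nat.add_le_add (card_image_le.trans (by simp)) (card_image_le.trans (by simp)))) ?_
  simp only [ownGroupPairs, mem_union, mem_image, mem_univ, true_and]
  rintro _ (⟨j, rfl⟩ | ⟨j, rfl⟩) <;> rfl

theorem sum_backwardPairs_le (occ : Fin n → Fin m → Option Bool) (nv : Fin m → Fin n) :
    ∑ p ∈ backwardPairs occ nv, msize n m s₁ s₂ p.1 * msize n m s₁ s₂ p.2 ≤
      n * (s₁ * (s₁ + 3)) + m * m * (s₂ * s₂) + m * ((n - 1) * 3) * (s₂ * (s₁ + 3)) +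
        (m + m) * (s₂ * s₁) := by
  refine (sum_union_le_add _ _ _).trans (Nat.add_le_add ?_ (sum_ownGroupPairs_le nv))
  refine (sum_union_le_add _ _ _).trans (Nat.add_le_add ?_ (sum_crossPairs_le occ nv))
  exact (sum_union_le_add _ _ _).trans (Nat.add_le_add sum_dePairs_le sum_clausePairs_le)

end BackwardPairs

theorem pair_count_bound_le {n m s₁ s₂ : ℕ} (h : m = 0 ∨ 0 < n) :
    n * (s₁ * (s₁ + 3)) + m * m * (s₂ * s₂) + m * ((n - 1) * 3) * (s₂ * (s₁ + 3)) +
        (m + m) * (s₂ * s₁) ≤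
      n * s₁ ^ 2 + (3 * n - 1) * m * s₁ * s₂ + 3 * n * s₁ + m ^ 2 * s₂ ^ 2 +
        9 * m * (n - 1) * s₂ := by
  rcases h with rfl | hn
  · exact le_of_eq (by ring)
  · obtain ⟨k, rfl⟩ : ∃ k, n = k + 1 := ⟨n - 1, by omega⟩
    rw [show 3 * (k + 1) - 1 = 3 * k + 2 by omega, Nat.add_sub_cancel]
    exact le_of_eq (by ring)

theorem stmt11_general (n m s₁ s₂ : ℕ)
    (occ : Fin n → Fin m → Option Bool)
    (hallF : ∀ j : Fin m, ∃ i : Fin n, occ i j = some false) :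
    ∃ r : Vtx n m s₁ s₂ → Vtx n m s₁ s₂ → Prop, IsStrictTotalOrder (Vtx n m s₁ s₂) r ∧
      (fasSet (arc occ) r).ncard ≤
        n * s₁ ^ 2 + (3 * n - 1) * m * s₁ * s₂ + 3 * n * s₁ + m ^ 2 * s₂ ^ 2 +
          9 * m * (n - 1) * s₂ := by
  choose nv hnv using hallF
  have hnm : m = 0 ∨ 0 < n := m.eq_zero_or_pos.imp_right fun hm => (nv ⟨0, hm⟩).pos
  refine ⟨fun u v => blowupKey (ModName.key nv) u < blowupKey (ModName.key nv) v,
    isStrictTotalOrder_blowupKey (ModName.key_injective nv), ?_⟩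
  calc _ ≤ ∑ p ∈ backwardPairs occ nv, msize n m s₁ s₂ p.1 * msize n m s₁ s₂ p.2 :=
        ncard_fasSet_blowupKey_le (ModName.key_injective nv) _
          fun _ _ => mem_backwardPairs hnv
    _ ≤ _ := sum_backwardPairs_le occ nv
    _ ≤ _ := pair_count_bound_le hnm

/-- There is a linear order on the vertices of `T_φ` whose implied feedback arc set has
size at most `n·s₁² + (3n−1)m·s₁·s₂ + 3n·s₁ + m²·s₂² + 9m(n−1)·s₂`. -/
theorem stmt11 (n m s₁ s₂ : ℕ) (hn : 0 < n) (hm : 0 < m) (hs₁ : 0 < s₁) (hs₂ : 0 < s₂)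
    (occ : Fin n → Fin m → Option Bool)
    (h3lit : ∀ j : Fin m, ({i : Fin n | occ i j ≠ none}).ncard ≤ 3)
    (hallF : ∀ j : Fin m, ∃ i : Fin n, occ i j = some false) :
    ∃ r : Vtx n m s₁ s₂ → Vtx n m s₁ s₂ → Prop, IsStrictTotalOrder (Vtx n m s₁ s₂) r ∧
      (fasSet (arc occ) r).ncard ≤
        n * s₁ ^ 2 + (3 * n - 1) * m * s₁ * s₂ + 3 * n * s₁ + m ^ 2 * s₂ ^ 2 +
          9 * m * (n - 1) * s₂ :=
  stmt11_general n m s₁ s₂ occ hallF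
end

section
/- Suppose s₁² > (3n−1)m·s₁·s₂ + 3n·s₁ + m²·s₂² + 9m(n−1)·s₂, and let B = n·s₁² + (3n−1)m·s₁·s₂ + 3n·s₁ + m²·s₂² + 9m(n−1)·s₂. Then every linear order on the vertices of T_φ in which each of the 6n+m modules is contiguous and whose implied feedback arc set has size at most B is structured. -/
/-! Every order reverses at least one arc of the cyclic triangle `D_i → E_i → F_i → D_i` of each
group, and with contiguous modules a reversed arc between two modules of size `≥ s₁` reverses
all `≥ s₁²` arcs between them. An order that is not structured reverses a further such pair of
modules: a second arc of some triangle, or an arc between groups or out of `A_i ∪ B_i ∪ C_i`.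
So it has at least `(n + 1) s₁²` backward arcs, more than `B` since `s₁² > B - n s₁²`. -/

section StrictTotalOrder

variable {V : Type*} {r : V → V → Prop}

lemma rel_of_not_rel_of_ne (hr : IsStrictTotalOrder V r) {u v : V} (huv : ¬ r u v)
    (hne : u ≠ v) : r v u :=
  by_contra fun hvu => hne (hr.toTrichotomous.trichotomous u v huv hvu)

lemma Before.trans_of_nonempty (hr : IsStrictTotalOrder V r) {S S' S'' : Set V}
    (h₁ : Before r S S') (h₂ : Before r S' S'') (hS' : S'.Nonempty) : Before r S S'' := by
  obtain ⟨w, hw⟩ := hS'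
  exact fun u hu v hv => hr.toIsStrictOrder.toIsTrans.trans u w v (h₁ u hu w hw) (h₂ w hw v hv)

lemma Contig.before_or_before (hr : IsStrictTotalOrder V r) {S S' : Set V} (hS : Contig r S)
    (hS' : Contig r S') (hdisj : Disjoint S S') : Before r S S' ∨ Before r S' S := by
  by_contra! h
  obtain ⟨⟨u, hu, v, hv, huv⟩, ⟨a, ha, b, hb, hab⟩⟩ :
      (∃ u ∈ S, ∃ v ∈ S', ¬ r u v) ∧ ∃ a ∈ S', ∃ b ∈ S, ¬ r a b := by
    simpa [Before] using h
  have hvu := rel_of_not_rel_of_ne hr huv fun e => Set.disjoint_left.1 hdisj hu (e ▸ hv)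
  have hba := rel_of_not_rel_of_ne hr hab fun e => Set.disjoint_left.1 hdisj hb (e ▸ ha)
  rcases trichotomous_of r u a with hua | rfl | hau
  · exact hS' ⟨v, hv, a, ha, u, Set.disjoint_left.1 hdisj hu, hvu, hua⟩
  · exact Set.disjoint_left.1 hdisj hu ha
  · exact hS ⟨b, hb, u, hu, a, Set.disjoint_right.1 hdisj ha, hba, hau⟩

end StrictTotalOrder

section Modules

variable {n m s₁ s₂ : ℕ} {occ : Fin n → Fin m → Option Bool}
  {r : Vtx n m s₁ s₂ → Vtx n m s₁ s₂ → Prop}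

lemma disjoint_mset {M M' : ModName n m} (h : M ≠ M') :
    Disjoint (mset M : Set (Vtx n m s₁ s₂)) (mset M') :=
  Set.disjoint_left.2 fun _ hv hv' => h (hv.symm.trans hv')

lemma before_mset_of_not_rel (hr : IsStrictTotalOrder (Vtx n m s₁ s₂) r)
    (hcontig : ∀ M : ModName n m, Contig r (mset M)) {M M' : ModName n m} (hne : M ≠ M')
    {u v : Vtx n m s₁ s₂} (hu : u ∈ mset M) (hv : v ∈ mset M') (huv : ¬ r u v) :
    Before r (mset M') (mset M) :=
  ((hcontig M).before_or_before hr (hcontig M') (disjoint_mset hne)).resolve_left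
    fun h => huv (h u hu v hv)

lemma le_msize_of_grp_eq_some {M : ModName n m} {i : Fin n} (h : grp? M = some i) :
    s₁ ≤ msize n m s₁ s₂ M := by
  cases M <;> simp only [msize, grp?, reduceCtorEq] at h ⊢ <;> first | rfl | split <;> omega

/-- All arcs from `p.1` to `p.2`, at least `s₁²` of them, are backward. -/
def IsLargeReversedPair (occ : Fin n → Fin m → Option Bool)
    (r : Vtx n m s₁ s₂ → Vtx n m s₁ s₂ → Prop) (p : ModName n m × ModName n m) : Prop :=
  p.1 ≠ p.2 ∧ modArc occ p.1 p.2 ∧ Before r (mset p.2) (mset p.1) ∧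
    s₁ ≤ msize n m s₁ s₂ p.1 ∧ s₁ ≤ msize n m s₁ s₂ p.2

lemma card_mul_sq_le_ncard_fasSet (P : Finset (ModName n m × ModName n m))
    (hP : ∀ p ∈ P, IsLargeReversedPair occ r p) :
    P.card * s₁ ^ 2 ≤ (fasSet (arc occ) r).ncard := by
  classical
  let arcsBetween (p : ModName n m × ModName n m) : Finset (Vtx n m s₁ s₂ × Vtx n m s₁ s₂) :=
    Finset.univ.map (Function.Embedding.sigmaMk p.1) ×ˢ
      Finset.univ.map (Function.Embedding.sigmaMk p.2)
  have hdisj : (P : Set (ModName n m × ModName n m)).PairwiseDisjoint arcsBetween := by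
    intro p _ q _ hpq
    refine Finset.disjoint_left.2 fun x hp hq => hpq ?_
    simp only [arcsBetween, Finset.mem_product, Finset.mem_map, Finset.mem_univ, true_and,
      Function.Embedding.sigmaMk_apply] at hp hq
    obtain ⟨⟨_, hp₁⟩, ⟨_, hp₂⟩⟩ := hp
    obtain ⟨⟨_, hq₁⟩, ⟨_, hq₂⟩⟩ := hq
    exact Prod.ext ((congrArg Sigma.fst hp₁).trans (congrArg Sigma.fst hq₁).symm)
      ((congrArg Sigma.fst hp₂).trans (congrArg Sigma.fst hq₂).symm)
  have hsub : (↑(P.biUnion arcsBetween) : Set (Vtx n m s₁ s₂ × Vtx n m s₁ s₂)) ⊆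
      fasSet (arc occ) r := by
    rintro ⟨u, v⟩ hx
    simp only [arcsBetween, Finset.coe_biUnion, Set.mem_iUnion, Finset.mem_coe,
      Finset.mem_product, Finset.mem_map, Finset.mem_univ, true_and,
      Function.Embedding.sigmaMk_apply] at hx
    obtain ⟨p, hp, ⟨a, rfl⟩, ⟨b, rfl⟩⟩ := hx
    obtain ⟨hne, harc, hbefore, -⟩ := hP p hp
    exact ⟨Or.inr ⟨hne, harc⟩, hbefore _ rfl _ rfl⟩
  calc P.card * s₁ ^ 2
      ≤ ∑ p ∈ P, msize n m s₁ s₂ p.1 * msize n m s₁ s₂ p.2 := by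
        rw [← smul_eq_mul, sq]
        exact Finset.card_nsmul_le_sum _ _ _ fun p hp =>
          Nat.mul_le_mul (hP p hp).2.2.2.1 (hP p hp).2.2.2.2
    _ = (P.biUnion arcsBetween).card := by
        rw [Finset.card_biUnion hdisj]
        simp [arcsBetween]
    _ ≤ (fasSet (arc occ) r).ncard := by
        rw [← Set.ncard_coe_finset]
        exact Set.ncard_le_ncard hsub (Set.toFinite _)

def triangle (i : Fin n) : Finset (ModName n m × ModName n m) :=
  {(.D i, .E i), (.E i, .F i), (.F i, .D i)}

def CyclicDEF (r : Vtx n m s₁ s₂ → Vtx n m s₁ s₂ → Prop) (i : Fin n) : Prop :=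
  (Before r (mset (.D i)) (mset (.E i)) ∧ Before r (mset (.E i)) (mset (.F i))) ∨
    (Before r (mset (.E i)) (mset (.F i)) ∧ Before r (mset (.F i)) (mset (.D i))) ∨
    (Before r (mset (.F i)) (mset (.D i)) ∧ Before r (mset (.D i)) (mset (.E i)))

lemma grp_eq_of_mem_triangle {i : Fin n} {p : ModName n m × ModName n m} (h : p ∈ triangle i) :
    grp? p.1 = some i ∧ grp? p.2 = some i ∧ 3 ≤ rk p.1 := by
  simp only [triangle, Finset.mem_insert, Finset.mem_singleton] at h
  rcases h with rfl | rfl | rfl <;> simp [grp?, rk]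

lemma pairwiseDisjoint_triangle (s : Set (Fin n)) : s.PairwiseDisjoint (triangle (m := m)) :=
  fun _ _ _ _ hij => Finset.disjoint_left.2 fun _ hi hj =>
    hij (Option.some.inj ((grp_eq_of_mem_triangle hi).1.symm.trans (grp_eq_of_mem_triangle hj).1))

lemma isLargeReversedPair_iff_of_mem_triangle {i : Fin n} {p : ModName n m × ModName n m}
    (h : p ∈ triangle i) : IsLargeReversedPair occ r p ↔ Before r (mset p.2) (mset p.1) := by
  refine ⟨fun hp => hp.2.2.1, fun hp => ⟨?_, ?_, hp, le_msize_of_grp_eq_some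
    (grp_eq_of_mem_triangle h).1, le_msize_of_grp_eq_some (grp_eq_of_mem_triangle h).2.1⟩⟩ <;>
  simp only [triangle, Finset.mem_insert, Finset.mem_singleton] at h <;>
  rcases h with rfl | rfl | rfl <;> simp [modArc, grp?, rk]

lemma mset_E_nonempty (i : Fin n) : (mset (.E i) : Set (Vtx n m s₁ s₂)).Nonempty :=
  ⟨⟨.E i, ⟨0, by simp only [msize]; split <;> omega⟩⟩, rfl⟩

lemma exists_mem_triangle_before (hr : IsStrictTotalOrder (Vtx n m s₁ s₂) r)
    (hcontig : ∀ M : ModName n m, Contig r (mset M)) (i : Fin n) :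
    ∃ p ∈ triangle i, Before r (mset p.2) (mset p.1) := by
  rcases (hcontig (.D i)).before_or_before hr (hcontig (.E i)) (disjoint_mset (by simp))
    with hDE | hED
  · rcases (hcontig (.E i)).before_or_before hr (hcontig (.F i)) (disjoint_mset (by simp))
      with hEF | hFE
    · exact ⟨(.F i, .D i), by simp [triangle],
        hDE.trans_of_nonempty hr hEF (mset_E_nonempty i)⟩
    · exact ⟨(.E i, .F i), by simp [triangle], hFE⟩
  · exact ⟨(.D i, .E i), by simp [triangle], hED⟩

lemma exists_ne_mem_triangle_before (hr : IsStrictTotalOrder (Vtx n m s₁ s₂) r)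
    (hcontig : ∀ M : ModName n m, Contig r (mset M)) {i : Fin n} (hi : ¬ CyclicDEF r i) :
    ∃ p ∈ triangle i, ∃ q ∈ triangle i, p ≠ q ∧
      Before r (mset p.2) (mset p.1) ∧ Before r (mset q.2) (mset q.1) := by
  unfold CyclicDEF at hi
  rcases (hcontig (.D i)).before_or_before hr (hcontig (.E i)) (disjoint_mset (by simp))
    with hDE | hED <;>
  rcases (hcontig (.E i)).before_or_before hr (hcontig (.F i)) (disjoint_mset (by simp))
    with hEF | hFE <;>
  rcases (hcontig (.F i)).before_or_before hr (hcontig (.D i)) (disjoint_mset (by simp))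
    with hFD | hDF
  · exact absurd (Or.inl ⟨hDE, hEF⟩) hi
  · exact absurd (Or.inl ⟨hDE, hEF⟩) hi
  · exact absurd (Or.inr (Or.inr ⟨hFD, hDE⟩)) hi
  · exact ⟨(.E i, .F i), by simp [triangle], (.F i, .D i), by simp [triangle], by simp,
      hFE, hDF⟩
  · exact absurd (Or.inr (Or.inl ⟨hEF, hFD⟩)) hi
  · exact ⟨(.D i, .E i), by simp [triangle], (.F i, .D i), by simp [triangle], by simp,
      hED, hDF⟩
  all_goals exact ⟨(.D i, .E i), by simp [triangle], (.E i, .F i), by simp [triangle], by simp,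
    hED, hFE⟩

lemma rel_of_forall_isLargeReversedPair_mem_triangle
    (hr : IsStrictTotalOrder (Vtx n m s₁ s₂) r)
    (hcontig : ∀ M : ModName n m, Contig r (mset M))
    (hrev : ∀ p, IsLargeReversedPair occ r p → ∃ k, p ∈ triangle k)
    {u v : Vtx n m s₁ s₂} {i i' : Fin n} (hu : grp? u.1 = some i) (hv : grp? v.1 = some i')
    (hlt : i < i' ∨ i = i' ∧ rk u.1 < rk v.1 ∧ rk u.1 ≤ 2) : r u v := by
  by_contra huv
  have hne : u.1 ≠ v.1 := fun h => by
    rw [h, hv] at hu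
    rw [h] at hlt
    cases hu
    omega
  have harc : modArc occ u.1 v.1 := by
    refine Or.inl ⟨i, i', hu, hv, ?_⟩
    rcases hlt with h | ⟨rfl, h₁, h₂⟩
    exacts [Or.inl h, Or.inr ⟨rfl, Or.inl ⟨h₁, by omega⟩⟩]
  obtain ⟨k, hk⟩ := hrev (u.1, v.1) ⟨hne, harc,
    before_mset_of_not_rel hr hcontig hne rfl rfl huv,
    le_msize_of_grp_eq_some hu, le_msize_of_grp_eq_some hv⟩
  obtain ⟨hku, hkv, hrk⟩ := grp_eq_of_mem_triangle hk
  dsimp only at hrk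
  rw [hu] at hku
  rw [hv] at hkv
  cases hku
  cases hkv
  omega

lemma structured_of_forall_isLargeReversedPair_mem_triangle
    (hr : IsStrictTotalOrder (Vtx n m s₁ s₂) r) (hcontig : ∀ M : ModName n m, Contig r (mset M))
    (hcyc : ∀ i, CyclicDEF r i)
    (hrev : ∀ p, IsLargeReversedPair occ r p → ∃ k, p ∈ triangle k) :
    Structured r := by
  have key {u v : Vtx n m s₁ s₂} {i i' : Fin n} :=
    rel_of_forall_isLargeReversedPair_mem_triangle (u := u) (v := v) (i := i) (i' := i')
      hr hcontig hrev
  refine ⟨hcontig, fun i i' hii' u hu v hv => key hu hv (Or.inl hii'), fun i => ?_, hcyc⟩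
  simp only [Before, mset, Set.mem_union, Set.mem_ofPred_eq]
  refine ⟨?_, ?_, ?_⟩
  · intro u hu v hv
    exact key (by rw [hu]; rfl) (by rw [hv]; rfl) (Or.inr ⟨rfl, by simp [hu, hv, rk]⟩)
  · intro u hu v hv
    exact key (by rw [hu]; rfl) (by rw [hv]; rfl) (Or.inr ⟨rfl, by simp [hu, hv, rk]⟩)
  · rintro u ((hu | hu) | hu) v ((hv | hv) | hv) <;>
      exact key (by rw [hu]; rfl) (by rw [hv]; rfl) (Or.inr ⟨rfl, by simp [hu, hv, rk]⟩)

lemma exists_large_reversed_pairs_of_not_structured (hr : IsStrictTotalOrder (Vtx n m s₁ s₂) r)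
    (hcontig : ∀ M : ModName n m, Contig r (mset M)) (hns : ¬ Structured r) :
    ∃ P : Finset (ModName n m × ModName n m),
      (∀ p ∈ P, IsLargeReversedPair occ r p) ∧ n + 1 ≤ P.card := by
  classical
  let P := Finset.univ.filter (IsLargeReversedPair occ r)
  let U := Finset.univ.biUnion (triangle (n := n) (m := m))
  refine ⟨P, fun p hp => (Finset.mem_filter.1 hp).2, ?_⟩
  have hsum : (P ∩ U).card = ∑ i, (P ∩ triangle i).card := by
    rw [Finset.inter_biUnion, Finset.card_biUnion]
    exact (pairwiseDisjoint_triangle _).mono_on fun _ _ => Finset.inter_subset_right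
  have hmem {i : Fin n} {p} (hp : p ∈ triangle i) (hbefore : Before r (mset p.2) (mset p.1)) :
      p ∈ P ∩ triangle i :=
    Finset.mem_inter.2 ⟨Finset.mem_filter.2 ⟨Finset.mem_univ _,
      (isLargeReversedPair_iff_of_mem_triangle hp).2 hbefore⟩, hp⟩
  have hone (i : Fin n) : 1 ≤ (P ∩ triangle i).card := by
    obtain ⟨p, hp, hbefore⟩ := exists_mem_triangle_before hr hcontig i
    exact Finset.card_pos.2 ⟨p, hmem hp hbefore⟩
  rw [← Finset.card_inter_add_card_sdiff P U, hsum]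
  by_cases hcyc : ∀ i, CyclicDEF r i
  · obtain ⟨p, hp, hpU⟩ : ∃ p, IsLargeReversedPair occ r p ∧ ∀ k, p ∉ triangle k := by
      by_contra! h
      exact hns (structured_of_forall_isLargeReversedPair_mem_triangle hr hcontig hcyc h)
    have hsdiff : 1 ≤ (P \ U).card := Finset.card_pos.2 ⟨p, by simp [P, U, hp, hpU]⟩
    have hcycles : n ≤ ∑ i, (P ∩ triangle i).card := by
      simpa using Finset.sum_le_sum fun i (_ : i ∈ Finset.univ) => hone i
    omega
  · obtain ⟨i, hi⟩ := not_forall.1 hcyc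
    obtain ⟨p, hp, q, hq, hpq, hpb, hqb⟩ := exists_ne_mem_triangle_before hr hcontig hi
    have htwo : 1 < (P ∩ triangle i).card :=
      Finset.one_lt_card.2 ⟨p, hmem hp hpb, q, hmem hq hqb, hpq⟩
    have hcycles : n < ∑ i, (P ∩ triangle i).card := by
      simpa using Finset.sum_lt_sum (fun i (_ : i ∈ Finset.univ) => hone i) ⟨i, by simp, htwo⟩
    omega

end Modules

theorem stmt12_general (n m s₁ s₂ : ℕ)
    (occ : Fin n → Fin m → Option Bool)
    (hineq1 : s₁ ^ 2 > (3 * n - 1) * m * s₁ * s₂ + 3 * n * s₁ + m ^ 2 * s₂ ^ 2 +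
      9 * m * (n - 1) * s₂)
    (r : Vtx n m s₁ s₂ → Vtx n m s₁ s₂ → Prop) (hr : IsStrictTotalOrder (Vtx n m s₁ s₂) r)
    (hcontig : ∀ M : ModName n m, Contig r (mset M))
    (hfas : (fasSet (arc occ) r).ncard ≤
      n * s₁ ^ 2 + (3 * n - 1) * m * s₁ * s₂ + 3 * n * s₁ + m ^ 2 * s₂ ^ 2 +
        9 * m * (n - 1) * s₂) :
    Structured r := by
  by_contra hns
  obtain ⟨P, hP, hcard⟩ :=
    exists_large_reversed_pairs_of_not_structured (occ := occ) hr hcontig hns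
  have hbackward : (n + 1) * s₁ ^ 2 ≤ (fasSet (arc occ) r).ncard :=
    (Nat.mul_le_mul_right _ hcard).trans (card_mul_sq_le_ncard_fasSet P hP)
  rw [add_one_mul] at hbackward
  omega

/-- If `s₁² > (3n−1)m·s₁·s₂ + 3n·s₁ + m²·s₂² + 9m(n−1)·s₂`, then every linear order
on the vertices of `T_φ` in which every module is contiguous and whose implied feedback
arc set has size at most `B = n·s₁² + (3n−1)m·s₁·s₂ + 3n·s₁ + m²·s₂² + 9m(n−1)·s₂`
is structured. -/
theorem stmt12 (n m s₁ s₂ : ℕ) (hn : 0 < n) (hm : 0 < m) (hs₁ : 0 < s₁) (hs₂ : 0 < s₂)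
    (occ : Fin n → Fin m → Option Bool)
    (h3lit : ∀ j : Fin m, ({i : Fin n | occ i j ≠ none}).ncard ≤ 3)
    (hallF : ∀ j : Fin m, ∃ i : Fin n, occ i j = some false)
    (hineq1 : s₁ ^ 2 > (3 * n - 1) * m * s₁ * s₂ + 3 * n * s₁ + m ^ 2 * s₂ ^ 2 +
      9 * m * (n - 1) * s₂)
    (r : Vtx n m s₁ s₂ → Vtx n m s₁ s₂ → Prop) (hr : IsStrictTotalOrder (Vtx n m s₁ s₂) r)
    (hcontig : ∀ M : ModName n m, Contig r (mset M))
    (hfas : (fasSet (arc occ) r).ncard ≤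
      n * s₁ ^ 2 + (3 * n - 1) * m * s₁ * s₂ + 3 * n * s₁ + m ^ 2 * s₂ ^ 2 +
        9 * m * (n - 1) * s₂) :
    Structured r :=
  stmt12_general n m s₁ s₂ occ hineq1 r hr hcontig hfas
end

section
/- Let ≺ be a structured linear order on the vertices of T_φ. Then for every j ∈ {1,…,m}, the number of arcs of the feedback arc set implied by ≺ that have one endpoint in T_j and the other endpoint in one of the modules A_i, B_i, C_i, D_i, E_i, F_i (i ∈ {1,…,n}) is at least (3n−1)·s₁·s₂. -/
/-! Fix a vertex `t` of `T_j`. By contiguity every variable module lies entirely before or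
entirely after `t`, and in each group the modules before `t` form an initial segment of one of
the three admissible orders of the group. As `T_j` beats exactly three of the six modules of
every group, a finite check shows that at least two modules of each group have all their arcs
with `t` backwards, and at least three if the whole group lies on one side of `t`. Since the
groups are ordered, at most one of them straddles `t`. Hence at least `3n - 1` modules, each of
at least `s₁` vertices, contribute feedback arcs at each of the `s₂` vertices of `T_j`. -/

open Finset

section Order

variable {V : Type*} {r : V → V → Prop} {S S' S'' : Set V}

theorem Before.mono {T T' : Set V} (h : Before r S S') (hT : T ⊆ S) (hT' : T' ⊆ S') :
    Before r T T' :=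
  fun u hu v hv => h u (hT hu) v (hT' hv)

theorem Before.trans [IsTrans V r] (h : Before r S S') (h' : Before r S' S'')
    (hS' : S'.Nonempty) : Before r S S'' := by
  obtain ⟨w, hw⟩ := hS'
  exact fun u hu v hv => _root_.trans (h u hu w hw) (h' w hw v hv)

theorem Before.not_before_singleton [Std.Irrefl r] [IsTrans V r] {x : V}
    (h : Before r {x} S) (hS : S.Nonempty) : ¬ Before r S {x} := fun h' =>
  irrefl x ((h.trans h' hS) x rfl x rfl)

theorem Before.before_singleton_or [IsStrictTotalOrder V r] (h : Before r S S') (x : V) :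
    Before r S {x} ∨ Before r {x} S' := by
  by_contra! hx
  simp only [Before, Set.mem_singleton_iff, forall_eq, not_forall] at hx
  obtain ⟨⟨u, hu, hux⟩, ⟨v, hv, hxv⟩⟩ := hx
  obtain hxu | rfl : r x u ∨ x = u := by
    rcases trichotomous_of r u x with h₁ | h₁ | h₁ <;> tauto
  · rcases trichotomous_of r v x with hvx | rfl | hxv'
    · exact irrefl x (_root_.trans (_root_.trans hxu (h u hu v hv)) hvx)
    · exact hux (h u hu v hv)
    · exact hxv hxv'
  · exact hxv (h x hu v hv)

theorem Contig.before_or_before_s14 [Std.Trichotomous r] (hS : Contig r S) {x : V} (hx : x ∉ S) :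
    Before r S {x} ∨ Before r {x} S := by
  by_contra! h
  simp only [Before, Set.mem_singleton_iff, forall_eq, not_forall] at h
  obtain ⟨⟨u, hu, hux⟩, ⟨v, hv, hxv⟩⟩ := h
  have hxu : r x u :=
    ((trichotomous_of r u x).resolve_left hux).resolve_left (by rintro rfl; exact hx hu)
  have hvx : r v x :=
    ((trichotomous_of r x v).resolve_left hxv).resolve_left (by rintro rfl; exact hx hv)
  exact hS ⟨v, hv, u, hu, x, hx, hvx, hxu⟩

end Order

namespace ModName

variable {n m s₁ s₂ : ℕ}

def ofRank (i : Fin n) : Fin 6 → ModName n m := ![.A i, .B i, .C i, .D i, .E i, .F i]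

theorem grp?_ofRank (i : Fin n) (ρ : Fin 6) : grp? (ofRank (m := m) i ρ) = some i := by
  fin_cases ρ <;> rfl

theorem rk_ofRank (i : Fin n) (ρ : Fin 6) : rk (ofRank (m := m) i ρ) = ρ := by
  fin_cases ρ <;> rfl

theorem ofRank_inj {i i' : Fin n} {ρ ρ' : Fin 6} :
    ofRank (m := m) i ρ = ofRank i' ρ' ↔ i = i' ∧ ρ = ρ' := by
  refine ⟨fun h => ⟨?_, ?_⟩, fun ⟨hi, hρ⟩ => hi ▸ hρ ▸ rfl⟩
  · simpa [grp?_ofRank] using congrArg grp? h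
  · simpa [rk_ofRank, Fin.ext_iff] using congrArg rk h

theorem ofRank_ne_T (i : Fin n) (ρ : Fin 6) (j : Fin m) : ofRank i ρ ≠ .T j := fun h => by
  simpa [h, grp?] using grp?_ofRank (m := m) i ρ

theorem le_msize_ofRank (i : Fin n) (ρ : Fin 6) : s₁ ≤ msize n m s₁ s₂ (ofRank i ρ) := by
  fin_cases ρ <;> simp [ofRank, msize]; split_ifs <;> omega

theorem mset_ofRank_nonempty (hs₁ : 0 < s₁) (i : Fin n) (ρ : Fin 6) :
    (mset (s₁ := s₁) (s₂ := s₂) (ofRank (m := m) i ρ)).Nonempty :=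
  ⟨⟨ofRank i ρ, ⟨0, hs₁.trans_le (le_msize_ofRank i ρ)⟩⟩, rfl⟩

theorem mset_ofRank_subset_gset (i : Fin n) (ρ : Fin 6) :
    mset (s₁ := s₁) (s₂ := s₂) (ofRank (m := m) i ρ) ⊆ gset i := fun v hv => by
  simp only [mset, gset, Set.mem_ofPred_eq] at hv ⊢
  rw [hv, grp?_ofRank]

end ModName

open ModName

instance (o : Option Bool) (ρ : ℕ) : Decidable (tBeats o ρ) := by
  rcases o with _ | _ | _ <;> unfold tBeats <;> infer_instance

/-- `groupOrder c k` is the rank of the `k`-th module in the `c`-th admissible order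
`ABCDEF`, `ABCEFD`, `ABCFDE` of a group. -/
def groupOrder : Fin 3 → Fin 6 → Fin 6 :=
  ![![0, 1, 2, 3, 4, 5], ![0, 1, 2, 4, 5, 3], ![0, 1, 2, 5, 3, 4]]

/-- Here `b ρ` records whether the module of rank `ρ` precedes a given vertex of a clause
module, so that the hypothesis says these modules form an initial segment of the group. -/
theorem two_le_card_tBeats_eq (o : Option Bool) (c : Fin 3) (b : Fin 6 → Bool)
    (hb : ∀ k : Fin 5, b (groupOrder c k.succ) = true → b (groupOrder c k.castSucc) = true) :
    2 ≤ #{ρ : Fin 6 | decide (tBeats o ρ) = b ρ} := by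
  revert o c b; decide

theorem three_le_card_tBeats_eq (o : Option Bool) (b : Bool) :
    3 ≤ #{ρ : Fin 6 | decide (tBeats o ρ) = b} := by
  revert o b; decide

theorem Structured.before_groupOrder {n m s₁ s₂ : ℕ} {r : Vtx n m s₁ s₂ → Vtx n m s₁ s₂ → Prop}
    (hstr : Structured r) (i : Fin n) :
    ∃ c : Fin 3, ∀ k : Fin 5, Before r (mset (ofRank i (groupOrder c k.castSucc)))
      (mset (ofRank i (groupOrder c k.succ))) := by
  obtain ⟨-, -, habc, hdef⟩ := hstr
  obtain ⟨hAB, hBC, hC⟩ := habc i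
  have hCD : Before r (mset (.C i)) (mset (.D i)) :=
    hC.mono Set.subset_union_right (Set.subset_union_left.trans Set.subset_union_left)
  have hCE : Before r (mset (.C i)) (mset (.E i)) :=
    hC.mono Set.subset_union_right (Set.subset_union_right.trans Set.subset_union_left)
  have hCF : Before r (mset (.C i)) (mset (.F i)) :=
    hC.mono Set.subset_union_right Set.subset_union_right
  rcases hdef i with ⟨hDE, hEF⟩ | ⟨hEF, hFD⟩ | ⟨hFD, hDE⟩
  · exact ⟨0, fun k => by fin_cases k; exacts [hAB, hBC, hCD, hDE, hEF]⟩
  · exact ⟨1, fun k => by fin_cases k; exacts [hAB, hBC, hCE, hEF, hFD]⟩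
  · exact ⟨2, fun k => by fin_cases k; exacts [hAB, hBC, hCF, hFD, hDE]⟩

section Clause

open Classical

variable {n m s₁ s₂ : ℕ} (occ : Fin n → Fin m → Option Bool)
  (r : Vtx n m s₁ s₂ → Vtx n m s₁ s₂ → Prop) (j : Fin m)

/-- Once the module of rank `ρ` of group `i` lies on one side of the vertex `t` of `T_j`, this
says that all arcs between `t` and that module are feedback arcs. -/
def IsFeedbackModule (t : Fin s₂) (i : Fin n) (ρ : Fin 6) : Prop :=
  tBeats (occ i j) ρ ↔ Before r (mset (ofRank i ρ)) {⟨.T j, t⟩}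

def clauseFas : Set (Vtx n m s₁ s₂ × Vtx n m s₁ s₂) :=
  {p | p ∈ fasSet (arc occ) r ∧
    ((p.1.1 = .T j ∧ ∃ i : Fin n, grp? p.2.1 = some i) ∨
     (p.2.1 = .T j ∧ ∃ i : Fin n, grp? p.1.1 = some i))}

def clauseArc (x : (Fin s₂ × Fin n × Fin 6) × Fin s₁) : Vtx n m s₁ s₂ × Vtx n m s₁ s₂ :=
  let ⟨⟨t, i, ρ⟩, k⟩ := x
  let v : Vtx n m s₁ s₂ := ⟨ofRank i ρ, Fin.castLE (le_msize_ofRank i ρ) k⟩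
  if tBeats (occ i j) ρ then (⟨.T j, t⟩, v) else (v, ⟨.T j, t⟩)

variable {occ r j}

theorem two_le_card_isFeedbackModule [IsTrans _ r] (hs₁ : 0 < s₁) (hstr : Structured r)
    (t : Fin s₂) (i : Fin n) : 2 ≤ #{ρ | IsFeedbackModule occ r j t i ρ} := by
  obtain ⟨c, hc⟩ := hstr.before_groupOrder i
  let b ρ := decide (Before r (mset (ofRank i ρ)) {⟨.T j, t⟩})
  have hb (k : Fin 5) : b (groupOrder c k.succ) = true → b (groupOrder c k.castSucc) = true := by
    simpa [b] using fun h => (hc k).trans h (mset_ofRank_nonempty hs₁ _ _)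
  convert two_le_card_tBeats_eq (occ i j) c b hb using 3
  simp [IsFeedbackModule, b]

theorem three_le_card_isFeedbackModule [IsStrictOrder _ r] (hs₁ : 0 < s₁) {t : Fin s₂}
    {i : Fin n} (hside : Before r (gset i) {⟨.T j, t⟩} ∨ Before r {⟨.T j, t⟩} (gset i)) :
    3 ≤ #{ρ | IsFeedbackModule occ r j t i ρ} := by
  obtain ⟨b, hb⟩ : ∃ b : Bool, ∀ ρ, Before r (mset (ofRank i ρ)) {⟨.T j, t⟩} ↔ b = true := by
    rcases hside with h | h
    · exact ⟨true, fun ρ => iff_of_true (h.mono (mset_ofRank_subset_gset i ρ) subset_rfl) rfl⟩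
    · exact ⟨false, fun ρ => iff_of_false ((h.mono subset_rfl (mset_ofRank_subset_gset i ρ)
        ).not_before_singleton (mset_ofRank_nonempty hs₁ i ρ)) Bool.false_ne_true⟩
  convert three_le_card_tBeats_eq (occ i j) b using 3
  cases b <;> simp [IsFeedbackModule, hb]

theorem three_mul_sub_one_le_sum_card [IsStrictTotalOrder _ r] (hs₁ : 0 < s₁)
    (hstr : Structured r) (t : Fin s₂) :
    3 * n - 1 ≤ ∑ i, #{ρ | IsFeedbackModule occ r j t i ρ} := by
  by_cases hside : ∀ i : Fin n, Before r (gset i) {⟨.T j, t⟩} ∨ Before r {⟨.T j, t⟩} (gset i)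
  · calc 3 * n - 1 ≤ #(univ : Finset (Fin n)) • 3 := by simp; omega
      _ ≤ _ := card_nsmul_le_sum _ _ _ fun i _ => three_le_card_isFeedbackModule hs₁ (hside i)
  obtain ⟨i₀, hi₀⟩ := not_forall.mp hside
  have hrest : ∀ i ∈ univ.erase i₀, 3 ≤ #{ρ | IsFeedbackModule occ r j t i ρ} := by
    intro i hi
    refine three_le_card_isFeedbackModule hs₁ ?_
    rcases lt_or_gt_of_ne (ne_of_mem_erase hi) with h | h
    · exact ((hstr.2.1 i i₀ h).before_singleton_or _).imp id (fun h' => absurd (Or.inr h') hi₀)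
    · exact ((hstr.2.1 i₀ i h).before_singleton_or _).imp (fun h' => absurd (Or.inl h') hi₀) id
  have hsum := card_nsmul_le_sum _ _ _ hrest
  rw [card_erase_of_mem (mem_univ i₀), card_univ, Fintype.card_fin, smul_eq_mul] at hsum
  have h₀ := two_le_card_isFeedbackModule (occ := occ) (j := j) hs₁ hstr t i₀
  rw [← add_sum_erase _ _ (mem_univ i₀)]
  omega

theorem clauseArc_mem_clauseFas [Std.Trichotomous r] (hcontig : ∀ M, Contig r (mset M))
    {x : (Fin s₂ × Fin n × Fin 6) × Fin s₁}
    (hx : IsFeedbackModule occ r j x.1.1 x.1.2.1 x.1.2.2) :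
    clauseArc occ j x ∈ clauseFas occ r j := by
  obtain ⟨⟨t, i, ρ⟩, k⟩ := x
  have hne := ofRank_ne_T (m := m) i ρ j
  by_cases hbeat : tBeats (occ i j) ρ
  · simp only [clauseArc, if_pos hbeat]
    refine ⟨⟨Or.inr ⟨hne.symm, Or.inr (Or.inr (Or.inl ⟨j, i, rfl, grp?_ofRank i ρ, ?_⟩))⟩,
      hx.mp hbeat _ rfl _ rfl⟩, Or.inl ⟨rfl, i, grp?_ofRank i ρ⟩⟩
    rwa [rk_ofRank]
  · simp only [clauseArc, if_neg hbeat]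
    have hafter := ((hcontig (ofRank i ρ)).before_or_before_s14 (x := ⟨.T j, t⟩)
      (fun h => hne h.symm)).resolve_left (mt hx.mpr hbeat)
    refine ⟨⟨Or.inr ⟨hne, Or.inr (Or.inr (Or.inr ⟨i, j, grp?_ofRank i ρ, rfl, ?_⟩))⟩,
      hafter _ rfl _ rfl⟩, Or.inr ⟨rfl, i, grp?_ofRank i ρ⟩⟩
    rwa [rk_ofRank]

theorem clauseArc_injective : Function.Injective (clauseArc (s₁ := s₁) (s₂ := s₂) occ j) := by
  let unorient (p : Vtx n m s₁ s₂ × Vtx n m s₁ s₂) := if p.1.1 = .T j then p else p.swap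
  have hunorient (t i ρ k) : unorient (clauseArc occ j ((t, i, ρ), k)) =
      (⟨.T j, t⟩, ⟨ofRank i ρ, Fin.castLE (le_msize_ofRank i ρ) k⟩) := by
    simp only [unorient, clauseArc]
    split_ifs <;> simp_all [ofRank_ne_T]
  refine Function.Injective.of_comp (f := unorient) ?_
  rintro ⟨⟨t, i, ρ⟩, k⟩ ⟨⟨t', i', ρ'⟩, k'⟩ h
  simp only [Function.comp_apply, hunorient, Prod.mk.injEq] at h
  obtain ⟨ht, hv⟩ := h
  obtain ⟨rfl, rfl⟩ := ofRank_inj.mp (congrArg Sigma.fst hv)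
  have ht₂ := congrArg (fun v : Vtx n m s₁ s₂ => (v.2 : ℕ)) ht
  have hv₂ := congrArg (fun v : Vtx n m s₁ s₂ => (v.2 : ℕ)) hv
  simp_all [Fin.ext_iff]

theorem card_filter_isFeedbackModule :
    #{y : Fin s₂ × Fin n × Fin 6 | IsFeedbackModule occ r j y.1 y.2.1 y.2.2} =
      ∑ t, ∑ i, #{ρ | IsFeedbackModule occ r j t i ρ} := by
  simp only [card_filter, Fintype.sum_prod_type]

theorem card_mul_le_ncard_clauseFas [Std.Trichotomous r] (hcontig : ∀ M, Contig r (mset M)) :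
    #{y : Fin s₂ × Fin n × Fin 6 | IsFeedbackModule occ r j y.1 y.2.1 y.2.2} * s₁ ≤
      (clauseFas occ r j).ncard := by
  calc _ = #(({y : Fin s₂ × Fin n × Fin 6 | IsFeedbackModule occ r j y.1 y.2.1 y.2.2} :
        Finset _) ×ˢ (univ : Finset (Fin s₁))) := by
        rw [card_product, card_univ, Fintype.card_fin]
    _ ≤ _ := by
      rw [← Set.ncard_coe_finset]
      refine Set.ncard_le_ncard_of_injOn _ (fun x hx => clauseArc_mem_clauseFas hcontig ?_)
        clauseArc_injective.injOn
      simpa using hx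

end Clause

theorem stmt14_general (n m s₁ s₂ : ℕ) (hs₁ : 0 < s₁)
    (occ : Fin n → Fin m → Option Bool)
    (r : Vtx n m s₁ s₂ → Vtx n m s₁ s₂ → Prop) (hr : IsStrictTotalOrder (Vtx n m s₁ s₂) r)
    (hstr : Structured r) :
    ∀ j : Fin m, (3 * n - 1) * s₁ * s₂ ≤
      {p : Vtx n m s₁ s₂ × Vtx n m s₁ s₂ | p ∈ fasSet (arc occ) r ∧
        ((p.1.1 = .T j ∧ ∃ i : Fin n, grp? p.2.1 = some i) ∨
         (p.2.1 = .T j ∧ ∃ i : Fin n, grp? p.1.1 = some i))}.ncard := by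
  classical
  intro j
  calc (3 * n - 1) * s₁ * s₂ = ∑ _t : Fin s₂, (3 * n - 1) * s₁ := by simp [mul_comm]
    _ ≤ ∑ t, (∑ i, #{ρ | IsFeedbackModule occ r j t i ρ}) * s₁ := by
        gcongr with t
        exact three_mul_sub_one_le_sum_card hs₁ hstr t
    _ = #{y : Fin s₂ × Fin n × Fin 6 | IsFeedbackModule occ r j y.1 y.2.1 y.2.2} * s₁ := by
        rw [card_filter_isFeedbackModule, sum_mul]
    _ ≤ (clauseFas occ r j).ncard := card_mul_le_ncard_clauseFas hstr.1

/-- In a structured order, for every clause module `T_j`, the number of feedback arcs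
with one endpoint in `T_j` and the other endpoint in a variable module is at least
`(3n−1)·s₁·s₂`. -/
theorem stmt14 (n m s₁ s₂ : ℕ) (hn : 0 < n) (hm : 0 < m) (hs₁ : 0 < s₁) (hs₂ : 0 < s₂)
    (occ : Fin n → Fin m → Option Bool)
    (h3lit : ∀ j : Fin m, ({i : Fin n | occ i j ≠ none}).ncard ≤ 3)
    (hallF : ∀ j : Fin m, ∃ i : Fin n, occ i j = some false)
    (r : Vtx n m s₁ s₂ → Vtx n m s₁ s₂ → Prop) (hr : IsStrictTotalOrder (Vtx n m s₁ s₂) r)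
    (hstr : Structured r) :
    ∀ j : Fin m, (3 * n - 1) * s₁ * s₂ ≤
      {p : Vtx n m s₁ s₂ × Vtx n m s₁ s₂ | p ∈ fasSet (arc occ) r ∧
        ((p.1.1 = .T j ∧ ∃ i : Fin n, grp? p.2.1 = some i) ∨
         (p.2.1 = .T j ∧ ∃ i : Fin n, grp? p.1.1 = some i))}.ncard :=
  stmt14_general n m s₁ s₂ hs₁ occ r hr hstr
end
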